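/- arXiv:1709.05221 — 10 statements merged into one kernel-verified Lean document; each statement's English description precedes it below -/
import Mathlib

section
/- Let f : X → Y be a function and (A_n) a decreasing sequence of subsets of X. Suppose B ⊆ f(A_0), B \ f(A_n) is finite for each n, and B ∩ (⋂_n f(A_n)) is countable. Then there exists D ⊆ A_0 such that D \ A_n is finite for each n and f(D) = B. -/
/-!
Split `B` into its part `C = B ∩ ⋂ n, f '' A n` and the rest. A point `c` of the countable set `C`
can be lifted into `A k` for any `k`; giving distinct points distinct indices `k`, only finitely
many lifts leave each `A n`. A point `b ∈ B \ C` is lifted into the last `A n` whose image still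
contains `b`, so the lift leaves `A m` only when `b ∉ f '' A m`; as `f` is injective on these
lifts, only finitely many leave each `A m`.
-/

open Function Set

section

variable {X Y : Type*} {f : X → Y} {A : ℕ → Set X}

lemma exists_lift_forall_notMem_of_notMem_image (hA : Antitone A) {b : Y} (hb0 : b ∈ f '' A 0)
    (hb : ∃ n, b ∉ f '' A n) : ∃ x ∈ A 0, f x = b ∧ ∀ n, x ∉ A n → b ∉ f '' A n := by
  obtain ⟨n, hbn, hbn'⟩ := Nat.exists_not_and_succ_of_not_zero_of_exists (not_not.2 hb0) hb
  obtain ⟨x, hxA, rfl⟩ := not_not.1 hbn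
  refine ⟨x, hA n.zero_le hxA, rfl, fun m hxm hm => hbn' ?_⟩
  have hnm : n < m := lt_of_not_ge fun hmn => hxm (hA hmn hxA)
  exact image_mono (hA hnm) hm

lemma exists_lift_of_forall_notMem_image (hA : Antitone A) {B : Set Y} (hB0 : B ⊆ f '' A 0)
    (hBn : ∀ n, (B \ f '' A n).Finite) (hB : ∀ b ∈ B, ∃ n, b ∉ f '' A n) :
    ∃ D ⊆ A 0, (∀ n, (D \ A n).Finite) ∧ f '' D = B := by
  choose x hx0 hfx hxA using fun b : B => exists_lift_forall_notMem_of_notMem_image hA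
    (hB0 b.2) (hB b b.2)
  have hfx' : f ∘ x = Subtype.val := funext hfx
  refine ⟨range x, range_subset_iff.2 hx0, fun n => ?_,
    by rw [← range_comp, hfx', Subtype.range_coe]⟩
  have hinj : InjOn f (range x \ A n) := by
    rintro _ ⟨⟨b, rfl⟩, -⟩ _ ⟨⟨b', rfl⟩, -⟩ h
    rw [hfx, hfx, ← Subtype.ext_iff] at h
    rw [h]
  refine Finite.of_finite_image ((hBn n).subset ?_) hinj
  rintro _ ⟨_, ⟨⟨b, rfl⟩, hbn⟩, rfl⟩
  rw [hfx]
  exact ⟨b.2, hxA b n hbn⟩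

lemma exists_lift_of_countable_subset_iInter_image (hA : Antitone A) {C : Set Y}
    (hC : C.Countable) (hCA : C ⊆ ⋂ n, f '' A n) :
    ∃ D ⊆ A 0, (∀ n, (D \ A n).Finite) ∧ f '' D = C := by
  have := hC.to_subtype
  obtain ⟨ι, hι⟩ := Countable.exists_injective_nat C
  choose x hxA hfx using fun c : C => mem_iInter.1 (hCA c.2) (ι c)
  have hfx' : f ∘ x = Subtype.val := funext hfx
  refine ⟨range x, range_subset_iff.2 fun c => hA (ι c).zero_le (hxA c), fun n => ?_,
    by rw [← range_comp, hfx', Subtype.range_coe]⟩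
  refine (((finite_Iio n).preimage hι.injOn).image x).subset ?_
  rintro _ ⟨⟨c, rfl⟩, hcn⟩
  exact mem_image_of_mem x (lt_of_not_ge fun hnc => hcn (hA hnc (hxA c)))

end

/-- Lemma 4.1: lifting a pseudo-intersection through images. -/
theorem stmt1 {X Y : Type*} (f : X → Y) (A : ℕ → Set X)
    (hA : ∀ n, A (n + 1) ⊆ A n) (B : Set Y)
    (hB0 : B ⊆ f '' A 0) (hBn : ∀ n, (B \ f '' A n).Finite)
    (hcount : (B ∩ ⋂ n, f '' A n).Countable) :
    ∃ D : Set X, D ⊆ A 0 ∧ (∀ n, (D \ A n).Finite) ∧ f '' D = B := by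
  have hanti : Antitone A := antitone_nat_of_succ_le hA
  obtain ⟨D₁, hD₁0, hD₁n, hfD₁⟩ :=
    exists_lift_of_forall_notMem_image (B := B \ ⋂ n, f '' A n) hanti (sdiff_subset.trans hB0)
    (fun n => (hBn n).subset (sdiff_subset_sdiff_left sdiff_subset))
    (fun b hb => not_forall.1 fun h => hb.2 (mem_iInter.2 h))
  obtain ⟨D₂, hD₂0, hD₂n, hfD₂⟩ :=
    exists_lift_of_countable_subset_iInter_image hanti hcount inter_subset_right
  refine ⟨D₁ ∪ D₂, union_subset hD₁0 hD₂0, fun n => ?_, ?_⟩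
  · rw [union_sdiff_distrib]
    exact (hD₁n n).union (hD₂n n)
  · rw [image_union, hfD₁, hfD₂, sdiff_union_inter]
end

section
/- Let {X_n; f_n^{n+1}} be an inverse sequence of countable topological spaces, each with countable fan-tightness. Then the inverse limit X_∞ = lim← {X_n; f_n^{n+1}} has countable fan-tightness. -/
/-- A space has countable fan-tightness if for every point `x` and every sequence
`(A n)` of sets with `x ∈ closure (A n)` for all `n`, there are finite `K n ⊆ A n`
with `x ∈ closure (⋃ n, K n)`. -/
def CountableFanTightness (X : Type*) [TopologicalSpace X] : Prop :=
  ∀ (x : X) (A : ℕ → Set X), (∀ n, x ∈ closure (A n)) →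
    ∃ K : ℕ → Set X, (∀ n, K n ⊆ A n) ∧ (∀ n, (K n).Finite) ∧
      x ∈ closure (⋃ n, K n)

/-- Theorem 4.2: the inverse limit of countable spaces with countable fan-tightness
has countable fan-tightness. -/
theorem stmt2 (X : ℕ → Type*) [∀ n, TopologicalSpace (X n)] [∀ n, Countable (X n)]
    (f : ∀ n, X (n + 1) → X n) (hf : ∀ n, Continuous (f n))
    (hft : ∀ n, CountableFanTightness (X n)) :
    CountableFanTightness {x : ∀ n, X n // ∀ n, x n = f n (x (n + 1))} := by
  classical
  -- iterated bonding maps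
  have lift : ∀ i N, i ≤ N → ∃ g : X N → X i, Continuous g ∧
      ∀ y : {x : ∀ n, X n // ∀ n, x n = f n (x (n + 1))}, g (y.1 N) = y.1 i := by
    intro i N h
    induction N, h using Nat.le_induction with
    | base => exact ⟨id, continuous_id, fun y => rfl⟩
    | succ N hN ih =>
      obtain ⟨g, hg, hgy⟩ := ih
      refine ⟨g ∘ f N, hg.comp (hf N), fun y => ?_⟩
      show g (f N (y.1 (N + 1))) = y.1 i
      rw [← y.2 N]; exact hgy y
  -- closure criterion via single-coordinate neighborhoods
  have key : ∀ (x : {x : ∀ n, X n // ∀ n, x n = f n (x (n + 1))})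
      (S : Set {x : ∀ n, X n // ∀ n, x n = f n (x (n + 1))}),
      (∀ n (U : Set (X n)), IsOpen U → x.1 n ∈ U → ∃ a ∈ S, a.1 n ∈ U) →
      x ∈ closure S := by
    intro x S h
    rw [mem_closure_iff_nhds]
    intro t ht
    rw [nhds_induced] at ht
    obtain ⟨u, hu, hsub⟩ := Filter.mem_comap.mp ht
    rw [nhds_pi, Filter.mem_pi] at hu
    obtain ⟨I, hIfin, U, hU, hpi⟩ := hu
    obtain ⟨N, hN⟩ := hIfin.bddAbove
    have lift' : ∀ i, ∃ g : X N → X i, Continuous g ∧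
        (i ∈ I → ∀ y : {x : ∀ n, X n // ∀ n, x n = f n (x (n + 1))},
          g (y.1 N) = y.1 i) := by
      intro i
      by_cases hi : i ∈ I
      · obtain ⟨g, h1, h2⟩ := lift i N (hN hi)
        exact ⟨g, h1, fun _ => h2⟩
      · exact ⟨fun _ => x.1 i, continuous_const, fun h' => absurd h' hi⟩
    choose g hgc hgy using lift'
    choose V hVsub hVopen hVmem using fun i => mem_nhds_iff.mp (hU i)
    have hWopen : IsOpen (⋂ i ∈ I, (g i) ⁻¹' (V i)) :=
      Set.Finite.isOpen_biInter hIfin fun i _ => (hVopen i).preimage (hgc i)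
    have hxW : x.1 N ∈ ⋂ i ∈ I, (g i) ⁻¹' (V i) := by
      refine Set.mem_iInter₂.mpr fun i hi => ?_
      show g i (x.1 N) ∈ V i
      rw [hgy i hi x]; exact hVmem i
    obtain ⟨a, haS, haW⟩ := h N _ hWopen hxW
    refine ⟨a, ?_, haS⟩
    apply hsub
    show a.1 ∈ u
    apply hpi
    intro i hi
    have : g i (a.1 N) ∈ V i := Set.mem_iInter₂.mp haW i hi
    rw [hgy i hi a] at this
    exact hVsub i this
  -- main argument
  intro x A hA
  have hproj : ∀ n : ℕ,
      Continuous fun y : {x : ∀ n, X n // ∀ n, x n = f n (x (n + 1))} => y.1 n :=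
    fun n => (continuous_apply n).comp continuous_subtype_val
  have hxcl : ∀ n m, x.1 n ∈
      closure ((fun y : {x : ∀ n, X n // ∀ n, x n = f n (x (n + 1))} => y.1 n) '' A m) :=
    fun n m => (image_closure_subset_closure_image (hproj n)) ⟨x, hA m, rfl⟩
  have hF : ∀ n, ∃ F : ℕ → Set (X n),
      (∀ m, F m ⊆ (fun y : {x : ∀ n, X n // ∀ n, x n = f n (x (n + 1))} => y.1 n)
        '' A (n + m)) ∧ (∀ m, (F m).Finite) ∧ x.1 n ∈ closure (⋃ m, F m) :=
    fun n => hft n (x.1 n) _ (fun m => hxcl n (n + m))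
  choose F hF1 hF2 hF3 using hF
  have hL : ∀ n j, ∃ L : Set {x : ∀ n, X n // ∀ n, x n = f n (x (n + 1))},
      L ⊆ A (n + j) ∧ L.Finite ∧ ∀ p ∈ F n j, ∃ a ∈ L, a.1 n = p := by
    intro n j
    have := (hF2 n j).to_subtype
    choose gch hg1 hg2 using fun p : F n j => hF1 n j p.2
    refine ⟨Set.range gch, ?_, Set.finite_range _, ?_⟩
    · rintro a ⟨p, rfl⟩; exact hg1 p
    · intro p hp; exact ⟨gch ⟨p, hp⟩, ⟨⟨p, hp⟩, rfl⟩, hg2 ⟨p, hp⟩⟩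
  choose L hL1 hL2 hL3 using hL
  refine ⟨fun m => ⋃ n ∈ Finset.range (m + 1), L n (m - n), ?_, ?_, ?_⟩
  · intro m a ha
    simp only [Set.mem_iUnion] at ha
    obtain ⟨n, hn, ha⟩ := ha
    have hnm : n ≤ m := Nat.lt_succ_iff.mp (Finset.mem_range.mp hn)
    have := hL1 n (m - n) ha
    rwa [Nat.add_sub_cancel' hnm] at this
  · intro m
    exact Set.Finite.biUnion (Finset.range (m + 1)).finite_toSet fun n _ => hL2 n (m - n)
  · apply key
    intro n U hU hxU
    obtain ⟨p, hpU, hpF⟩ := mem_closure_iff.mp (hF3 n) U hU hxU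
    obtain ⟨j, hpj⟩ := Set.mem_iUnion.mp hpF
    obtain ⟨a, haL, hap⟩ := hL3 n j p hpj
    refine ⟨a, ?_, by rw [hap]; exact hpU⟩
    refine Set.mem_iUnion.mpr ⟨n + j, Set.mem_iUnion₂.mpr
      ⟨n, Finset.mem_range.mpr (Nat.lt_succ_of_le (Nat.le_add_right n j)), ?_⟩⟩
    simpa [Nat.add_sub_cancel_left] using haL
end

section
/- Let {X_n; f_n^{n+1}} be an inverse sequence with inverse limit X_∞, A ⊆ X_∞, and p = (p_n) ∈ X_∞ with p ∈ closure(A) \ A. Suppose there exist an increasing sequence (n_k) in ℕ and open sets O_k ⊆ X_∞ containing p such that p_{n_k} ∉ closure(π_{n_k}(A ∩ O_k) \ {p_{n_k}}) for each k. Then there is a sequence (a_i) in A \ {p} converging to p. -/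
open Filter

/-- If two points of the inverse limit agree at coordinate `n + d`, they agree at `n`. -/
lemma agree_aux {X : ℕ → Type*} (f : ∀ n, X (n + 1) → X n)
    (x y : {x : ∀ n, X n // ∀ n, x n = f n (x (n + 1))}) :
    ∀ d n, x.1 (n + d) = y.1 (n + d) → x.1 n = y.1 n := by
  intro d
  induction d with
  | zero => intro n hn; simpa using hn
  | succ d ih =>
    intro n hn
    have h1 : x.1 (n + 1) = y.1 (n + 1) := by
      apply ih (n + 1)
      have : n + (d + 1) = (n + 1) + d := by ring
      rw [this] at hn
      exact hn
    rw [x.2 n, y.2 n, h1]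

/-- Lemma 3.4: if along some increasing sequence of coordinates the projections of
`A` (restricted to suitable open neighborhoods of `p`) avoid accumulation at `p`,
then there is a sequence in `A \ {p}` converging to `p`. -/
theorem stmt3 (X : ℕ → Type*) [∀ n, TopologicalSpace (X n)]
    (f : ∀ n, X (n + 1) → X n) (hf : ∀ n, Continuous (f n))
    (A : Set {x : ∀ n, X n // ∀ n, x n = f n (x (n + 1))})
    (p : {x : ∀ n, X n // ∀ n, x n = f n (x (n + 1))})
    (hp : p ∈ closure A \ A)
    (nk : ℕ → ℕ) (hnk : StrictMono nk)
    (O : ℕ → Set {x : ∀ n, X n // ∀ n, x n = f n (x (n + 1))})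
    (hOopen : ∀ k, IsOpen (O k)) (hpO : ∀ k, p ∈ O k)
    (h : ∀ k, p.1 (nk k) ∉
        closure ((fun z : {x : ∀ n, X n // ∀ n, x n = f n (x (n + 1))} =>
          z.1 (nk k)) '' (A ∩ O k) \ {p.1 (nk k)})) :
    ∃ a : ℕ → {x : ∀ n, X n // ∀ n, x n = f n (x (n + 1))},
      (∀ i, a i ∈ A \ {p}) ∧ Tendsto a atTop (nhds p) := by
  -- for each k, find a point of A agreeing with p at coordinate nk k
  have key : ∀ k : ℕ, ∃ a : {x : ∀ n, X n // ∀ n, x n = f n (x (n + 1))}, a ∈ A ∧ a.1 (nk k) = p.1 (nk k) := by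
    intro k
    set S := ((fun z : {x : ∀ n, X n // ∀ n, x n = f n (x (n + 1))} => z.1 (nk k)) '' (A ∩ O k) \ {p.1 (nk k)})
    have hVopen : IsOpen (closure S)ᶜ := isOpen_compl_iff.mpr isClosed_closure
    have hproj : Continuous fun z : {x : ∀ n, X n // ∀ n, x n = f n (x (n + 1))} => z.1 (nk k) :=
      (continuous_apply (nk k)).comp continuous_subtype_val
    set U : Set {x : ∀ n, X n // ∀ n, x n = f n (x (n + 1))} := O k ∩ (fun z : {x : ∀ n, X n // ∀ n, x n = f n (x (n + 1))} => z.1 (nk k)) ⁻¹' (closure S)ᶜ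
    have hUopen : IsOpen U := (hOopen k).inter (hVopen.preimage hproj)
    have hpU : p ∈ U := ⟨hpO k, h k⟩
    obtain ⟨a, haU, haA⟩ := mem_closure_iff.mp hp.1 U hUopen hpU
    refine ⟨a, haA, ?_⟩
    by_contra hne
    have : a.1 (nk k) ∈ S := ⟨⟨a, ⟨haA, haU.1⟩, rfl⟩, hne⟩
    exact haU.2 (subset_closure this)
  choose a haA hagree using key
  refine ⟨a, fun i => ⟨haA i, fun hip => hp.2 (by rw [← hip]; exact haA i)⟩, ?_⟩
  rw [tendsto_subtype_rng, tendsto_pi_nhds]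
  intro n
  apply Tendsto.congr' _ tendsto_const_nhds
  filter_upwards [eventually_ge_atTop n] with k hk
  have hnkk : n ≤ nk k := le_trans hk (hnk.le_apply)
  exact (agree_aux f (a k) p (nk k - n) n (by rw [Nat.add_sub_cancel' hnkk]; exact hagree k)).symm
end

section
/- Let {X_n; f_n^{n+1}} be an inverse sequence of regular discretely generated spaces. Then the inverse limit X_∞ = lim← {X_n; f_n^{n+1}} is discretely generated. -/
open Filter Set Topology

section Aux

lemma discreteTopology_of_isolated {Z : Type*} [TopologicalSpace Z] {E : Set Z}
    (h : ∀ w ∈ E, ∃ N : Set Z, IsOpen N ∧ w ∈ N ∧ N ∩ E ⊆ {w}) : DiscreteTopology ↥E := by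
  rw [discreteTopology_subtype_iff]
  intro w hw
  obtain ⟨N, hNo, hwN, hNE⟩ := h w hw
  have : 𝓝[≠] w ⊓ 𝓟 E = 𝓝 w ⊓ 𝓟 ({w}ᶜ ∩ E) := by
    rw [nhdsWithin, inf_assoc, inf_principal]
  rw [this, inf_principal_eq_bot]
  filter_upwards [hNo.mem_nhds hwN] with z hz
  intro hmem
  exact hmem.1 (hNE ⟨hz, hmem.2⟩)

lemma exists_isolating {Z : Type*} [TopologicalSpace Z] {s : Set Z}
    (hd : DiscreteTopology ↥s) {w : Z} (hw : w ∈ s) :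
    ∃ U : Set Z, IsOpen U ∧ w ∈ U ∧ U ∩ s ⊆ {w} := by
  rw [discreteTopology_subtype_iff] at hd
  have h := hd w hw
  rw [nhdsWithin, inf_assoc, inf_principal, inf_principal_eq_bot] at h
  obtain ⟨U, hUsub, hUo, hwU⟩ := mem_nhds_iff.1 h
  refine ⟨U, hUo, hwU, fun z hz => ?_⟩
  by_contra hne
  exact hUsub hz.1 ⟨fun h' => hne h', hz.2⟩

/-- Master construction: in a regular space, if for every `k` and every open
neighborhood `V` of `x` we can pick a discrete "piece" `P k V ⊆ V ∩ A`, and the pieces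
eventually meet every neighborhood of `x`, then there is a discrete subset of `A` with
`x` in its closure. -/
lemma master {Z : Type*} [TopologicalSpace Z] [RegularSpace Z] (x : Z) (A : Set Z)
    (P : ℕ → Set Z → Set Z)
    (h1 : ∀ k V, x ∈ V → IsOpen V → P k V ⊆ V ∩ A)
    (h2 : ∀ k V, x ∈ V → IsOpen V → DiscreteTopology ↥(P k V))
    (h3 : ∀ W ∈ 𝓝 x, ∃ k₀ : ℕ, ∀ k ≥ k₀, ∀ V, x ∈ V → IsOpen V → (P k V ∩ W).Nonempty) :
    ∃ E : Set Z, E ⊆ A ∧ DiscreteTopology ↥E ∧ x ∈ closure E := by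
  by_cases hdone : ∃ k V, x ∈ V ∧ IsOpen V ∧ x ∈ closure (P k V)
  · obtain ⟨k, V, hxV, hV, hcl⟩ := hdone
    exact ⟨P k V, (h1 k V hxV hV).trans inter_subset_right, h2 k V hxV hV, hcl⟩
  push_neg at hdone
  -- separating opens
  have hsep : ∀ k (V : Set Z), ∃ G : Set Z, IsOpen G ∧ x ∈ G ∧
      (x ∈ V → IsOpen V → closure G ∩ closure (P k V) = ∅) := by
    intro k V
    by_cases hc : x ∈ V ∧ IsOpen V
    · have hx : x ∈ (closure (P k V))ᶜ := hdone k V hc.1 hc.2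
      have hmem : (closure (P k V))ᶜ ∈ 𝓝 x :=
        (isClosed_closure.isOpen_compl).mem_nhds hx
      obtain ⟨C, hCmem, hCclosed, hCsub⟩ := exists_mem_nhds_isClosed_subset hmem
      refine ⟨interior C, isOpen_interior, mem_interior_iff_mem_nhds.2 hCmem, fun _ _ => ?_⟩
      have h1' : closure (interior C) ⊆ (closure (P k V))ᶜ :=
        (closure_minimal interior_subset hCclosed).trans hCsub
      ext z; simp only [mem_inter_iff, mem_empty_iff_false, iff_false, not_and]
      exact fun hz hz' => h1' hz hz'
    · exact ⟨univ, isOpen_univ, mem_univ x, fun h1' h2' => absurd ⟨h1', h2'⟩ hc⟩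
  choose G hGo hxG hGd using hsep
  -- recursive sequence of open neighborhoods
  let V : ℕ → Set Z := fun k => Nat.rec univ (fun k Vk => Vk ∩ G k Vk) k
  have hVsucc : ∀ k, V (k + 1) = V k ∩ G k (V k) := fun k => rfl
  have hVgood : ∀ k, x ∈ V k ∧ IsOpen (V k) := by
    intro k
    induction k with
    | zero => exact ⟨mem_univ x, isOpen_univ⟩
    | succ k ih => exact ⟨⟨ih.1, hxG k (V k)⟩, ih.2.inter (hGo k (V k))⟩
  have hmono : ∀ j k, k ≤ j → V j ⊆ V k := by
    intro j k hkj
    induction j with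
    | zero => simp_all
    | succ j ih =>
      rcases Nat.lt_or_ge k (j+1) with h | h
      · exact fun z hz => ih (Nat.lt_succ_iff.1 h) (by rw [hVsucc] at hz; exact hz.1)
      · have : k = j + 1 := le_antisymm hkj h
        subst this; exact fun z hz => hz
  refine ⟨⋃ k, P k (V k), ?_, ?_, ?_⟩
  · exact iUnion_subset fun k => (h1 k (V k) (hVgood k).1 (hVgood k).2).trans inter_subset_right
  · apply discreteTopology_of_isolated
    rintro w hw
    obtain ⟨k, hwk⟩ := mem_iUnion.1 hw
    obtain ⟨U, hUo, hwU, hUiso⟩ := exists_isolating (h2 k (V k) (hVgood k).1 (hVgood k).2) hwk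
    have hGdk := hGd k (V k) (hVgood k).1 (hVgood k).2
    refine ⟨U ∩ (closure (G k (V k)))ᶜ ∩ ⋂ j ∈ Finset.range k, G j (V j), ?_, ?_, ?_⟩
    · exact ((hUo.inter isClosed_closure.isOpen_compl).inter
        (isOpen_biInter_finset fun j _ => hGo j (V j)))
    · refine ⟨⟨hwU, fun hcl => ?_⟩, ?_⟩
      · exact absurd (Set.eq_empty_iff_forall_notMem.1 hGdk w ⟨hcl, subset_closure hwk⟩) not_false
      · refine mem_biInter fun j hj => ?_
        have : w ∈ V (j + 1) :=
          hmono k (j+1) (Finset.mem_range.1 hj) (h1 k (V k) (hVgood k).1 (hVgood k).2 hwk).1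
        rw [hVsucc] at this; exact this.2
    · rintro z ⟨⟨⟨hzU, hzG⟩, hzI⟩, hzE⟩
      obtain ⟨j, hzj⟩ := mem_iUnion.1 hzE
      rcases lt_trichotomy j k with h | h | h
      · exfalso
        have hzGj : z ∈ G j (V j) := by simpa using mem_iInter₂.1 hzI j (Finset.mem_range.2 h)
        have := hGd j (V j) (hVgood j).1 (hVgood j).2
        exact Set.eq_empty_iff_forall_notMem.1 this z ⟨subset_closure hzGj, subset_closure hzj⟩
      · subst h; exact hUiso ⟨hzU, hzj⟩
      · exfalso
        have : z ∈ V (k + 1) :=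
          hmono j (k+1) h (h1 j (V j) (hVgood j).1 (hVgood j).2 hzj).1
        rw [hVsucc] at this
        exact hzG (subset_closure this.2)
  · rw [mem_closure_iff_nhds]
    intro W hW
    obtain ⟨k₀, hk₀⟩ := h3 W hW
    obtain ⟨z, hz1, hz2⟩ := hk₀ k₀ le_rfl (V k₀) (hVgood k₀).1 (hVgood k₀).2
    exact ⟨z, hz2, mem_iUnion.2 ⟨k₀, hz1⟩⟩

/-- A sequence converging to `x` in a regular space contains a discrete subset with
`x` in its closure. -/
lemma seq_discrete {Z : Type*} [TopologicalSpace Z] [RegularSpace Z] (y : ℕ → Z) (x : Z)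
    (hy : Tendsto y atTop (𝓝 x)) :
    ∃ E : Set Z, E ⊆ Set.range y ∧ DiscreteTopology ↥E ∧ x ∈ closure E := by
  classical
  refine master x (Set.range y)
    (fun k V => if h : ∃ n, k ≤ n ∧ y n ∈ V then {y h.choose} else ∅) ?_ ?_ ?_
  · intro k V hxV hV
    by_cases h : ∃ n, k ≤ n ∧ y n ∈ V
    · simp only [dif_pos h]
      rintro z rfl
      exact ⟨h.choose_spec.2, mem_range_self _⟩
    · simp [dif_neg h]
  · intro k V hxV hV
    have : Set.Subsingleton (if h : ∃ n, k ≤ n ∧ y n ∈ V then {y h.choose} else ∅) := by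
      split
      · exact subsingleton_singleton
      · exact subsingleton_empty
    haveI := (Set.subsingleton_coe _).2 this
    exact Subsingleton.discreteTopology
  · intro W hW
    obtain ⟨k₀, hk₀⟩ := (tendsto_atTop'.1 hy) W hW
    refine ⟨k₀, fun k hk V hxV hV => ?_⟩
    have hex : ∃ n, k ≤ n ∧ y n ∈ V := by
      obtain ⟨m, hm⟩ := (tendsto_atTop'.1 hy) V (hV.mem_nhds hxV)
      exact ⟨max k m, le_max_left _ _, hm _ (le_max_right _ _)⟩
    simp only [dif_pos hex]
    exact ⟨y hex.choose, rfl, hk₀ _ (le_trans hk hex.choose_spec.1)⟩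

end Aux

/-- A space is discretely generated if for every set `A` and every point `x` in its
closure there is a discrete subset `E ⊆ A` with `x ∈ closure E`. -/
def DiscretelyGenerated (X : Type*) [TopologicalSpace X] : Prop :=
  ∀ (A : Set X) (x : X), x ∈ closure A →
    ∃ E : Set X, E ⊆ A ∧ DiscreteTopology ↥E ∧ x ∈ closure E

/-- Theorem 5.1: the inverse limit of regular discretely generated spaces is
discretely generated. -/
theorem stmt4 (X : ℕ → Type*) [∀ n, TopologicalSpace (X n)]
    [∀ n, RegularSpace (X n)]
    (f : ∀ n, X (n + 1) → X n) (hf : ∀ n, Continuous (f n))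
    (hDG : ∀ n, DiscretelyGenerated (X n)) :
    DiscretelyGenerated {x : ∀ n, X n // ∀ n, x n = f n (x (n + 1))} := by
  classical
  intro A x hxA
  let π : ∀ n, {x : ∀ n, X n // ∀ n, x n = f n (x (n + 1))} → X n := fun n z => z.1 n
  have hπ : ∀ n, Continuous (π n) := fun n => (continuous_apply n).comp continuous_subtype_val
  -- the neighborhood filter of `x` as a directed infimum over coordinates
  have hnhds : 𝓝 x = ⨅ n, comap (π n) (𝓝 (x.1 n)) := by
    rw [nhds_induced (Subtype.val) x, nhds_pi, Filter.pi, comap_iInf]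
    exact iInf_congr fun n => comap_comap
  have hanti : ∀ m n, m ≤ n → comap (π n) (𝓝 (x.1 n)) ≤ comap (π m) (𝓝 (x.1 m)) := by
    intro m n hmn
    induction n, hmn using Nat.le_induction with
    | base => exact le_rfl
    | succ n hmn ih =>
      refine le_trans ?_ ih
      have hfn : π n = f n ∘ π (n + 1) := funext fun z => z.2 n
      have h1 : comap (π (n+1)) (𝓝 (x.1 (n+1))) ≤
          comap (π (n+1)) (comap (f n) (𝓝 (f n (x.1 (n+1))))) :=
        comap_mono (((hf n).tendsto _).le_comap)
      refine h1.trans ?_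
      rw [comap_comap, ← hfn, ← x.2 n]
  have hbase : ∀ W ∈ 𝓝 x, ∃ n, ∃ S ∈ 𝓝 (x.1 n), π n ⁻¹' S ⊆ W := by
    intro W hW
    rw [hnhds] at hW
    have hdir : Directed (· ≥ ·) (fun n => comap (π n) (𝓝 (x.1 n))) := fun m n =>
      ⟨max m n, hanti m (max m n) (le_max_left _ _), hanti n (max m n) (le_max_right _ _)⟩
    obtain ⟨n, hn⟩ := (mem_iInf_of_directed hdir W).1 hW
    obtain ⟨S, hS, hsub⟩ := mem_comap.1 hn
    exact ⟨n, S, hS, hsub⟩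
  have hR0 : ∀ n (b : X n), b ∈ closure {x.1 n} → ∀ S ∈ 𝓝 (x.1 n), b ∈ S := by
    intro n b hb S hS
    have h1 : x.1 n ⤳ b := specializes_iff_mem_closure.2 hb
    exact mem_of_mem_nhds (h1.symm hS)
  by_cases hQ : ∀ N : ℕ, ∃ n, N ≤ n ∧
    ∀ V ∈ 𝓝 x, x.1 n ∈ closure ((π n '' (A ∩ V)) \ closure {x.1 n})
  · -- Case 1: cofinally many levels are "fat": use discrete generation levelwise.
    choose nk hnk1 hnk2 using hQ
    have hP : ∀ (k : ℕ) (V : Set {x : ∀ n, X n // ∀ n, x n = f n (x (n + 1))}),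
        ∃ E : Set {x : ∀ n, X n // ∀ n, x n = f n (x (n + 1))}, x ∈ V → IsOpen V →
        (E ⊆ V ∩ A ∧ DiscreteTopology ↥E ∧
          ∀ S ∈ 𝓝 (x.1 (nk k)), (E ∩ π (nk k) ⁻¹' S).Nonempty) := by
      intro k V
      by_cases hc : x ∈ V ∧ IsOpen V
      · have hVn : V ∈ 𝓝 x := hc.2.mem_nhds hc.1
        have hQk := hnk2 k V hVn
        obtain ⟨D, hD1, hD2, hD3⟩ := hDG (nk k) _ _ hQk
        have hlift : ∀ d : X (nk k),
            ∃ e : {x : ∀ n, X n // ∀ n, x n = f n (x (n + 1))},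
              d ∈ D → (e ∈ A ∩ V ∧ π (nk k) e = d) := by
          intro d
          by_cases hd : d ∈ D
          · obtain ⟨e, he, hed⟩ := (hD1 hd).1
            exact ⟨e, fun _ => ⟨he, hed⟩⟩
          · exact ⟨x, fun h => absurd h hd⟩
        choose sel hsel using hlift
        refine ⟨sel '' D, fun _ _ => ⟨?_, ?_, ?_⟩⟩
        · rintro z ⟨d, hd, rfl⟩
          exact ⟨(hsel d hd).1.2, (hsel d hd).1.1⟩
        · apply discreteTopology_of_isolated
          rintro w ⟨d, hd, rfl⟩
          obtain ⟨U, hUo, hdU, hUiso⟩ := exists_isolating hD2 hd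
          refine ⟨π (nk k) ⁻¹' U, (hUo.preimage (hπ (nk k))), ?_, ?_⟩
          · show π (nk k) (sel d) ∈ U
            rw [(hsel d hd).2]; exact hdU
          · rintro z ⟨hzU, d', hd', rfl⟩
            have : π (nk k) (sel d') ∈ U := hzU
            rw [(hsel d' hd').2] at this
            have hdd : d' = d := hUiso ⟨this, hd'⟩
            subst hdd; rfl
        · intro S hS
          obtain ⟨d, hdS, hdD⟩ := mem_closure_iff_nhds.1 hD3 S hS
          refine ⟨sel d, ⟨d, hdD, rfl⟩, ?_⟩
          show π (nk k) (sel d) ∈ S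
          rw [(hsel d hdD).2]; exact hdS
      · exact ⟨∅, fun h1 h2 => absurd ⟨h1, h2⟩ hc⟩
    choose P hP using hP
    refine master x A P (fun k V hx hV => ((hP k V) hx hV).1)
      (fun k V hx hV => ((hP k V) hx hV).2.1) ?_
    intro W hW
    obtain ⟨m, S, hS, hsub⟩ := hbase W hW
    refine ⟨m, fun k hk V hxV hV => ?_⟩
    have hmn : m ≤ nk k := le_trans hk (hnk1 k)
    have hmem : π m ⁻¹' S ∈ comap (π (nk k)) (𝓝 (x.1 (nk k))) :=
      hanti m (nk k) hmn (preimage_mem_comap hS)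
    obtain ⟨S', hS', hS'sub⟩ := mem_comap.1 hmem
    obtain ⟨z, hz1, hz2⟩ := ((hP k V) hxV hV).2.2 S' hS'
    exact ⟨z, hz1, hsub (hS'sub hz2)⟩
  · -- Case 2: eventually all levels are "thin": build a convergent sequence.
    push_neg at hQ
    obtain ⟨N, hN⟩ := hQ
    have hWex : ∀ n : ℕ, ∃ W ∈ 𝓝 x, ∀ z, z ∈ A → z ∈ W → N ≤ n →
        π n z ∈ closure {x.1 n} := by
      intro n
      by_cases hn : N ≤ n
      · obtain ⟨V, hVn, hVcl⟩ := hN n hn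
        rw [mem_closure_iff_nhds] at hVcl
        push_neg at hVcl
        obtain ⟨t, ht, htempty⟩ := hVcl
        refine ⟨V ∩ π n ⁻¹' t, inter_mem hVn ((hπ n).continuousAt.preimage_mem_nhds ht), ?_⟩
        intro z hzA hzW _
        by_contra hout
        have hmem : π n z ∈ t ∩ ((π n '' (A ∩ V)) \ closure {x.1 n}) :=
          ⟨hzW.2, ⟨z, ⟨hzA, hzW.1⟩, rfl⟩, hout⟩
        rw [htempty] at hmem
        exact hmem
      · exact ⟨univ, univ_mem, fun z _ _ hn' => absurd hn' hn⟩
    choose W hWn hWs using hWex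
    have hyex : ∀ n : ℕ, ∃ z, z ∈ A ∧ ∀ j, j ≤ n → z ∈ W j := by
      intro n
      have hmem : (⋂ j ∈ Finset.range (n+1), W j) ∈ 𝓝 x :=
        (Filter.biInter_finset_mem _).2 fun j _ => hWn j
      obtain ⟨z, hz1, hz2⟩ := mem_closure_iff_nhds.1 hxA _ hmem
      exact ⟨z, hz2, fun j hj =>
        mem_iInter₂.1 hz1 j (Finset.mem_range.2 (Nat.lt_succ_of_le hj))⟩
    choose y hyA hyW using hyex
    have hconv : Tendsto y atTop (𝓝 x) := by
      rw [tendsto_atTop']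
      intro s hs
      obtain ⟨m, S, hS, hsub⟩ := hbase s hs
      obtain ⟨S', hS', hS'sub⟩ :=
        mem_comap.1 (hanti m (max m N) (le_max_left _ _) (preimage_mem_comap hS))
      refine ⟨max m N, fun b hb => ?_⟩
      have h1 : π (max m N) (y b) ∈ closure {x.1 (max m N)} :=
        hWs (max m N) (y b) (hyA b) (hyW b (max m N) hb) (le_max_right _ _)
      have h2 : π (max m N) (y b) ∈ S' := hR0 (max m N) _ h1 S' hS'
      exact hsub (hS'sub h2)
    obtain ⟨E, hE1, hE2, hE3⟩ := seq_discrete y x hconv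
    exact ⟨E, hE1.trans (range_subset_iff.2 hyA), hE2, hE3⟩
end

section
/- Let X_n be discretely generated regular spaces for n ≥ 1 and suppose that every finite product ∏_{i=1}^m X_i is discretely generated. Then the countable product ∏_{i=1}^∞ X_i is discretely generated. -/
open Set Filter Function Topology

section

variable {Y Z : Type*} [TopologicalSpace Y] [TopologicalSpace Z]

lemma IsDiscrete.of_injOn_image {f : Y → Z} {s : Set Y} (hf : Continuous f) (hinj : InjOn f s)
    (hs : IsDiscrete (f '' s)) : IsDiscrete s :=
  have := hs.to_subtype
  isDiscrete_iff_discreteTopology.mpr <| DiscreteTopology.of_continuous_injective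
    (f := s.imageFactorization f) ((hf.comp continuous_subtype_val).subtype_mk _)
    hinj.imageFactorization_injective

lemma isDiscrete_iUnion_of_pairwise_disjoint {ι : Type*} {F G : ι → Set Y}
    (hF : ∀ i, IsDiscrete (F i)) (hFG : ∀ i, F i ⊆ G i) (hG : ∀ i, IsOpen (G i))
    (hdisj : Pairwise (Disjoint on G)) : IsDiscrete (⋃ i, F i) := by
  refine isDiscrete_iff_forall_mem_exists_isOpen.mpr fun y hy => ?_
  obtain ⟨i, hyi⟩ := mem_iUnion.mp hy
  obtain ⟨u, hu, huF⟩ := isDiscrete_iff_forall_mem_exists_isOpen.mp (hF i) y hyi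
  refine ⟨u ∩ G i, hu.inter (hG i), ?_⟩
  rw [← huF]
  ext z
  simp only [mem_inter_iff, mem_iUnion]
  constructor
  · rintro ⟨⟨hzu, hzG⟩, j, hzj⟩
    obtain rfl : j = i := by
      by_contra hji
      exact Set.disjoint_left.mp (hdisj hji) (hFG j hzj) hzG
    exact ⟨hzu, hzj⟩
  · rintro ⟨hzu, hzi⟩
    exact ⟨⟨hzu, hFG i hzi⟩, i, hzi⟩

lemma exists_isOpen_superset_notMem_closure [RegularSpace Y] {s : Set Y} {x : Y}
    (hx : x ∉ closure s) :
    ∃ u, IsOpen u ∧ s ⊆ u ∧ x ∉ closure u := by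
  obtain ⟨u, ⟨hu, hsu⟩, v, ⟨hxv, hv⟩, huv⟩ :=
    ((hasBasis_nhdsSet s).disjoint_iff (nhds_basis_opens x)).mp (disjoint_nhdsSet_nhds.mpr hx)
  exact ⟨u, hu, hsu, fun hxu => Set.disjoint_left.mp (huv.symm.closure_right hv) hxv hxu⟩

lemma DiscretelyGenerated.exists_isDiscrete_subset_mem_closure_image
    (hZ : DiscretelyGenerated Z) {f : Y → Z} (hf : Continuous f) {s : Set Y} {x : Y}
    (hx : x ∈ closure s) :
    ∃ t ⊆ s, IsDiscrete t ∧ f x ∈ closure (f '' t) := by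
  obtain ⟨e, hes, he, hxe⟩ :=
    hZ (f '' s) (f x) (image_closure_subset_closure_image hf ⟨x, hx, rfl⟩)
  obtain ⟨t, hts, hinj, rfl⟩ :=
    ((surjOn_image f s).mono subset_rfl hes).exists_subset_injOn_image_eq
  exact ⟨t, hts, .of_injOn_image hf hinj ⟨he⟩, hxe⟩

lemma exists_pairwise_disjoint_isOpen_of_forall_nhds (x : Y) (P : ℕ → Set Y → Prop)
    (h : ∀ n U, IsOpen U → x ∈ U → ∃ V ⊆ U, IsOpen V ∧ x ∉ closure V ∧ P n V) :
    ∃ V : ℕ → Set Y, Pairwise (Disjoint on V) ∧ ∀ n, IsOpen (V n) ∧ P n (V n) := by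
  let N := {U : Set Y // IsOpen U ∧ x ∈ U}
  choose g hgU hg using fun n (U : N) => h n U U.2.1 U.2.2
  let next (n : ℕ) (U : N) : N :=
    ⟨U.1 \ closure (g n U), U.2.1.sdiff isClosed_closure, U.2.2, (hg n U).2.1⟩
  let U : ℕ → N := fun n => Nat.rec ⟨univ, isOpen_univ, trivial⟩ next n
  have hU : Antitone fun n => (U n).1 := antitone_nat_of_succ_le fun n => sdiff_subset
  refine ⟨fun n => g n (U n), (pairwise_disjoint_on _).mpr fun i j hij => ?_,
    fun n => ⟨(hg n (U n)).1, (hg n (U n)).2.2⟩⟩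
  refine Set.disjoint_right.mpr fun y hyj hyi => ?_
  have hyU : y ∈ (U (i + 1)).1 := hU hij (hgU j (U j) hyj)
  exact hyU.2 (subset_closure hyi)

end

section FinRestrict

variable {X : ℕ → Type*} [∀ n, TopologicalSpace (X n)]

def restrictFin (n : ℕ) (a : ∀ k, X k) : ∀ i : Fin n, X i := fun i => a i

lemma continuous_restrictFin (n : ℕ) : Continuous (restrictFin (X := X) n) :=
  continuous_pi fun i => continuous_apply (i : ℕ)

lemma mem_closure_of_forall_restrictFin_mem_closure {s : Set (∀ k, X k)} {x : ∀ k, X k}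
    (h : ∀ n, restrictFin n x ∈ closure (restrictFin n '' s)) : x ∈ closure s := by
  refine mem_closure_iff_nhds.mpr fun W hW => ?_
  rw [nhds_pi, Filter.mem_pi'] at hW
  obtain ⟨I, t, ht, hIW⟩ := hW
  obtain ⟨n, hIn⟩ := I.exists_nat_subset_range
  have hV : (univ : Set (Fin n)).pi (fun i => t i) ∈ 𝓝 (restrictFin n x) :=
    set_pi_mem_nhds finite_univ fun i _ => ht i
  obtain ⟨_, hV, a, has, rfl⟩ := mem_closure_iff_nhds.mp (h n) _ hV
  refine ⟨a, hIW fun k hk => ?_, has⟩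
  exact hV ⟨k, Finset.mem_range.mp (hIn hk)⟩ (mem_univ _)

end FinRestrict

theorem stmt5_general (X : ℕ → Type*) [∀ n, TopologicalSpace (X n)]
    [∀ n, RegularSpace (X n)]
    (hfin : ∀ m : ℕ, DiscretelyGenerated (∀ i : Fin m, X i)) :
    DiscretelyGenerated (∀ n, X n) := by
  intro A x hxA
  by_contra! hA
  have step : ∀ n U, IsOpen U → x ∈ U → ∃ V ⊆ U, IsOpen V ∧ x ∉ closure V ∧
      ∃ F ⊆ A ∩ V, IsDiscrete F ∧ restrictFin n x ∈ closure (restrictFin n '' F) := by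
    intro n U hU hxU
    obtain ⟨F, hFUA, hF, hxF⟩ := (hfin n).exists_isDiscrete_subset_mem_closure_image
      (continuous_restrictFin n) (hU.inter_closure ⟨hxU, hxA⟩)
    obtain ⟨W, hW, hFW, hxW⟩ :=
      exists_isOpen_superset_notMem_closure (hA F (hFUA.trans inter_subset_right) hF.to_subtype)
    refine ⟨U ∩ W, inter_subset_left, hU.inter hW,
      fun h => hxW (closure_mono inter_subset_right h), F, ?_, hF, hxF⟩
    exact subset_inter (hFUA.trans inter_subset_right)
      (subset_inter (hFUA.trans inter_subset_left) hFW)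
  obtain ⟨V, hVdisj, hV⟩ := exists_pairwise_disjoint_isOpen_of_forall_nhds x _ step
  choose hVo F hFAV hF hxF using hV
  refine hA (⋃ n, F n) (iUnion_subset fun n => (hFAV n).trans inter_subset_left) ?_ ?_
  · exact (isDiscrete_iUnion_of_pairwise_disjoint hF (fun n => (hFAV n).trans inter_subset_right)
      hVo hVdisj).to_subtype
  · exact mem_closure_of_forall_restrictFin_mem_closure fun n =>
      closure_mono (image_mono (subset_iUnion F n)) (hxF n)

/-- Corollary 5.2 (Alas–Wilson): if all finite products of the regular discretely
generated spaces `X i` are discretely generated, then so is the countable product. -/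
theorem stmt5 (X : ℕ → Type*) [∀ n, TopologicalSpace (X n)]
    [∀ n, RegularSpace (X n)]
    (hDG : ∀ n, DiscretelyGenerated (X n))
    (hfin : ∀ m : ℕ, DiscretelyGenerated (∀ i : Fin m, X i)) :
    DiscretelyGenerated (∀ n, X n) :=
  stmt5_general X hfin
end

section
/- Let I and J be ideals on countable sets X and Y, and f : Y → X surjective such that f extended by f(∞) = ∞ is a closed map from Z(J*) to Z(I*). Then J ≤_K I and f is an open map. -/
/-- `I` is a free (nontrivial) ideal on `X`: downward closed, closed under unions,
containing all finite sets and not containing `univ`. -/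
def IsFreeIdeal {X : Type*} (I : Set (Set X)) : Prop :=
  (∀ ⦃A B : Set X⦄, A ∈ I → B ⊆ A → B ∈ I) ∧
  (∀ ⦃A B : Set X⦄, A ∈ I → B ∈ I → A ∪ B ∈ I) ∧
  (∀ A : Set X, A.Finite → A ∈ I) ∧ Set.univ ∉ I

/-- The space `Z(I*)`: `X ∪ {∞}` (with `∞ = none`), points of `X` isolated, and
neighborhoods of `∞` the sets whose complement in `X` lies in `I`. -/
def ZidealTop {X : Type*} (I : Set (Set X)) : TopologicalSpace (Option X) :=
  TopologicalSpace.generateFrom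
    ({U | ∃ x : X, U = {some x}} ∪ {U | ∃ A ∈ I, U = insert none (some '' Aᶜ)})

lemma zopen_iff {X : Type*} {I : Set (Set X)} (hI : IsFreeIdeal I) (U : Set (Option X)) :
    @IsOpen _ (ZidealTop I) U ↔ (none ∈ U → (some ⁻¹' U)ᶜ ∈ I) := by
  constructor
  · intro h
    induction h with
    | basic V hV =>
      rcases hV with ⟨x, rfl⟩ | ⟨A, hA, rfl⟩
      · simp
      · intro _
        have : (some ⁻¹' (insert none (some '' Aᶜ)))ᶜ = A := by ext y; simp
        rw [this]; exact hA
    | univ => intro _; simpa using hI.2.2.1 ∅ Set.finite_empty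
    | inter U V _ _ hU hV =>
      intro h
      have : ((some : X → Option X) ⁻¹' (U ∩ V))ᶜ = (some ⁻¹' U)ᶜ ∪ (some ⁻¹' V)ᶜ := by
        ext; simp only [Set.mem_compl_iff, Set.mem_preimage, Set.mem_inter_iff, Set.mem_union, not_and_or]
      rw [this]; exact hI.2.1 (hU h.1) (hV h.2)
    | sUnion S ihS ih =>
      intro h
      obtain ⟨U, hUS, hnU⟩ := h
      refine hI.1 (ih U hUS hnU) ?_
      intro y hy
      simp only [Set.mem_compl_iff, Set.mem_preimage, Set.mem_sUnion] at hy ⊢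
      exact fun h2 => hy ⟨U, hUS, h2⟩
  · intro h
    by_cases hn : none ∈ U
    · have hU : U = insert none (some '' ((some ⁻¹' U)ᶜ)ᶜ) := by
        ext z; cases z <;> simp [hn]
      rw [hU]
      exact TopologicalSpace.GenerateOpen.basic _ (Or.inr ⟨_, h hn, rfl⟩)
    · have hU : U = ⋃ x ∈ some ⁻¹' U, {some x} := by
        ext z; cases z <;> simp [hn]
      rw [hU]
      letI := ZidealTop I
      exact isOpen_biUnion fun x _ => TopologicalSpace.GenerateOpen.basic _ (Or.inl ⟨x, rfl⟩)

lemma zclosed_iff {X : Type*} {I : Set (Set X)} (hI : IsFreeIdeal I) (C : Set (Option X)) :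
    @IsClosed _ (ZidealTop I) C ↔ (none ∉ C → some ⁻¹' C ∈ I) := by
  letI := ZidealTop I
  rw [← isOpen_compl_iff, zopen_iff hI]
  simp [Set.preimage_compl]

/-- Proposition 6.1(3): if `f` is onto and its extension `f(∞) = ∞` is a closed map
`Z(J*) → Z(I*)`, then `J ≤_K I` and the extension is open. -/
theorem stmt10 {X Y : Type*} [Countable X] [Countable Y]
    (I : Set (Set X)) (J : Set (Set Y)) (hI : IsFreeIdeal I) (hJ : IsFreeIdeal J)
    (f : Y → X) (hsurj : Function.Surjective f)
    (hclosed : @IsClosedMap _ _ (ZidealTop J) (ZidealTop I) (Option.map f)) :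
    (∃ g : X → Y, ∀ D ∈ J, g ⁻¹' D ∈ I) ∧
      @IsOpenMap _ _ (ZidealTop J) (ZidealTop I) (Option.map f) := by
  have key : ∀ B ∈ J, f '' B ∈ I := by
    intro B hB
    have hC : @IsClosed _ (ZidealTop J) (some '' B) := by
      rw [zclosed_iff hJ]
      intro _
      have : (some : Y → Option Y) ⁻¹' (some '' B) = B := by ext y; simp
      rw [this]; exact hB
    have himg := hclosed _ hC
    rw [zclosed_iff hI] at himg
    have hn : none ∉ Option.map f '' (some '' B) := by
      rintro ⟨z, ⟨y, _, rfl⟩, hz⟩; simp at hz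
    have := himg hn
    have heq : (some : X → Option X) ⁻¹' (Option.map f '' (some '' B)) = f '' B := by
      ext x
      simp only [Set.mem_preimage, Set.mem_image]
      constructor
      · rintro ⟨z, ⟨y, hy, rfl⟩, hz⟩
        simp only [Option.map_some, Option.some.injEq] at hz
        exact ⟨y, hy, hz⟩
      · rintro ⟨y, hy, rfl⟩
        exact ⟨some y, ⟨y, hy, rfl⟩, rfl⟩
    rwa [heq] at this
  constructor
  · obtain ⟨g, hg⟩ := hsurj.hasRightInverse
    refine ⟨g, fun D hD => hI.1 (key D hD) ?_⟩
    intro x hx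
    exact ⟨g x, hx, hg x⟩
  · intro U hU
    rw [zopen_iff hJ] at hU
    rw [zopen_iff hI]
    intro hn
    obtain ⟨z, hzU, hz⟩ : ∃ z ∈ U, Option.map f z = none := hn
    have hzn : z = none := by cases z <;> simp_all
    subst hzn
    have hB : (some ⁻¹' U)ᶜ ∈ J := hU hzU
    refine hI.1 (key _ hB) ?_
    intro x hx
    simp only [Set.mem_compl_iff, Set.mem_preimage] at hx
    obtain ⟨y, rfl⟩ := hsurj x
    refine ⟨y, ?_, rfl⟩
    intro hy
    exact hx ⟨some y, hy, rfl⟩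
end

section
/- Let F be a filter on ℕ, Z = Z(F), and f : Z → Z a continuous bijection with f(∞) = ∞. Let X_∞ = lim← {Z; f} and let p ∈ X_∞ be the constant thread ∞. Then p is the only non-isolated point of X_∞, and the neighborhood filter of p is π_1^{-1}(⋃_k f^k(F)), i.e., generated by the sets π_1^{-1}(f^k(W)) for W ∈ F and k ∈ ℕ. -/
/-!
Since `f` is injective, a thread is determined by its coordinate `π₀`, and `π₀ = f^[k] ∘ π_k`;
hence `π_k⁻¹ V = π₀⁻¹ (f^[k] V)` for every `V`, and `comap π_k (𝓝 ∞) = comap π₀ (map f^[k] (𝓝 ∞))`.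
Continuity of `f` at its fixed point `∞` makes the filters `map f^[k] (𝓝 ∞)` decrease in `k`,
so the neighbourhood filter of `p`, their infimum, is their union. A thread `x ≠ p` has
`π₀ x = n` isolated in `Z(F)`, so `x` is isolated. The point `p` is not: by surjectivity of `f`,
every basic neighbourhood `π₀⁻¹ (f^[k] (insert ∞ W))` contains the thread with `π₀ = f^[k] n`
for some `n ∈ W`, and `f^[k] n ≠ ∞`.
-/

/-- The space `Z(F)` for a filter `F` on `ℕ`: points of `ℕ` isolated (`∞ = none`),
and the neighborhoods of `∞` given by the members of `F`. -/
def ZfilterTop (F : Filter ℕ) : TopologicalSpace (Option ℕ) :=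
  TopologicalSpace.generateFrom
    ({U | ∃ n : ℕ, U = {some n}} ∪ {U | ∃ A ∈ F, U = insert none (some '' A)})

open Filter Function Topology

namespace ZfilterTop

theorem isOpen_singleton_some (F : Filter ℕ) (n : ℕ) : IsOpen[ZfilterTop F] {some n} :=
  TopologicalSpace.isOpen_generateFrom_of_mem (Or.inl ⟨n, rfl⟩)

theorem hasBasis_nhds_none (F : Filter ℕ) :
    (@nhds _ (ZfilterTop F) none).HasBasis (· ∈ F) fun A => insert none (some '' A) := by
  refine ⟨fun s => ?_⟩
  rw [ZfilterTop, TopologicalSpace.nhds_generateFrom, mem_biInf_of_directed]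
  · constructor
    · rintro ⟨U, ⟨hnU, ⟨n, rfl⟩ | ⟨A, hA, rfl⟩⟩, hUs⟩
      · simp at hnU
      · exact ⟨A, hA, hUs⟩
    · rintro ⟨A, hA, hAs⟩
      exact ⟨_, ⟨Set.mem_insert _ _, Or.inr ⟨A, hA, rfl⟩⟩, hAs⟩
  · rintro U ⟨hnU, ⟨n, rfl⟩ | ⟨A, hA, rfl⟩⟩ V ⟨hnV, ⟨m, rfl⟩ | ⟨B, hB, rfl⟩⟩
    all_goals try simp at hnU hnV
    refine ⟨_, ⟨Set.mem_insert _ _, Or.inr ⟨A ∩ B, F.inter_mem hA hB, rfl⟩⟩, ?_, ?_⟩ <;>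
      exact principal_mono.2 (Set.insert_subset_insert (Set.image_mono (by simp)))
  · exact ⟨_, Set.mem_insert _ _, Or.inr ⟨Set.univ, univ_mem, rfl⟩⟩

end ZfilterTop

abbrev ConstInvLimit {α : Type*} (f : α → α) : Type _ :=
  {x : ℕ → α // ∀ n, x n = f (x (n + 1))}

namespace ConstInvLimit

variable {α : Type*} {f : α → α}

theorem iterate_apply (x : ConstInvLimit f) (n : ℕ) : f^[n] (x.1 n) = x.1 0 := by
  induction n with
  | zero => rfl
  | succ n ih => rw [iterate_succ_apply, ← x.2 n, ih]

theorem eval_zero_injective (hf : Injective f) : Injective fun x : ConstInvLimit f => x.1 0 :=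
  fun x y h => Subtype.ext <| funext fun n =>
    hf.iterate n <| (iterate_apply x n).trans (h.trans (iterate_apply y n).symm)

theorem eval_zero_surjective (hf : Surjective f) : Surjective fun x : ConstInvLimit f => x.1 0 :=
  fun a => ⟨⟨fun n => (surjInv hf)^[n] a, fun n => by
    show _ = f ((surjInv hf)^[n + 1] a)
    rw [iterate_succ_apply', rightInverse_surjInv hf]⟩, rfl⟩

theorem comap_eval_eq_comap_eval_zero (hf : Injective f) (n : ℕ) (l : Filter α) :
    comap (fun y : ConstInvLimit f => y.1 n) l =
      comap (fun y : ConstInvLimit f => y.1 0) (map f^[n] l) := by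
  have : (fun y : ConstInvLimit f => y.1 0) = f^[n] ∘ fun y => y.1 n :=
    funext fun y => (iterate_apply y n).symm
  rw [this, ← comap_comap, comap_map (hf.iterate n)]

variable [TopologicalSpace α]

theorem continuous_eval (n : ℕ) : Continuous fun x : ConstInvLimit f => x.1 n :=
  (continuous_apply n).comp continuous_subtype_val

theorem nhds_eq (x : ConstInvLimit f) :
    𝓝 x = ⨅ n, comap (fun y : ConstInvLimit f => y.1 n) (𝓝 (x.1 n)) := by
  refine (nhds_subtype _ x).trans ?_
  rw [nhds_pi, Filter.pi, comap_iInf]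
  simp_rw [comap_comap]
  rfl

theorem antitone_map_iterate_nhds (hc : Continuous f) {a : α} (ha : f a = a) :
    Antitone fun k => map f^[k] (𝓝 a) := by
  refine antitone_nat_of_succ_le fun k => ?_
  rw [iterate_succ, ← map_map]
  simpa only [ha] using map_mono (hc.tendsto a)

theorem mem_nhds_of_forall_eq_fixed (hf : Injective f) (hc : Continuous f) (x : ConstInvLimit f)
    {a : α} (hx : ∀ n, x.1 n = a) (s : Set (ConstInvLimit f)) :
    s ∈ 𝓝 x ↔ ∃ k, s ∈ comap (fun y : ConstInvLimit f => y.1 0) (map f^[k] (𝓝 a)) := by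
  have ha : f a = a := by simpa only [hx] using (x.2 0).symm
  rw [nhds_eq, iInf_congr fun n => by rw [hx n, comap_eval_eq_comap_eval_zero hf]]
  exact mem_iInf_of_directed (Antitone.directed_ge fun _ _ hkl =>
    comap_mono (antitone_map_iterate_nhds hc ha hkl)) s

theorem isOpen_singleton_of_isOpen_singleton_eval_zero (hf : Injective f) {x : ConstInvLimit f}
    (hx : IsOpen {x.1 0}) : IsOpen {x} := by
  have : {x} = (fun y : ConstInvLimit f => y.1 0) ⁻¹' {x.1 0} :=
    Set.ext fun y => (eval_zero_injective hf).eq_iff.symm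
  exact this ▸ hx.preimage (continuous_eval 0)

end ConstInvLimit

theorem stmt12_general (F : Filter ℕ) [F.NeBot]
    [t : TopologicalSpace (Option ℕ)] (ht : t = ZfilterTop F)
    (f : Option ℕ → Option ℕ) (hcont : Continuous f)
    (hbij : Function.Bijective f) (hinf : f none = none)
    (p : {x : ℕ → Option ℕ // ∀ n, x n = f (x (n + 1))})
    (hp : ∀ n, p.1 n = none) :
    (∀ x : {x : ℕ → Option ℕ // ∀ n, x n = f (x (n + 1))},
        x ≠ p → IsOpen ({x} : Set {x : ℕ → Option ℕ // ∀ n, x n = f (x (n + 1))})) ∧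
    ¬ IsOpen ({p} : Set {x : ℕ → Option ℕ // ∀ n, x n = f (x (n + 1))}) ∧
    (∀ S : Set {x : ℕ → Option ℕ // ∀ n, x n = f (x (n + 1))},
        S ∈ nhds p ↔ ∃ k : ℕ, ∃ W ∈ F,
          {x : {x : ℕ → Option ℕ // ∀ n, x n = f (x (n + 1))} |
            x.1 0 ∈ insert none (f^[k] '' (some '' W))} ⊆ S) := by
  subst ht
  -- `subst` leaves `ZfilterTop F` in the goal but no longer as a local instance
  let _ : TopologicalSpace (Option ℕ) := ZfilterTop F
  have hnhds (S : Set (ConstInvLimit f)) : S ∈ 𝓝 p ↔ ∃ k, ∃ W ∈ F,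
      {x : ConstInvLimit f | x.1 0 ∈ insert none (f^[k] '' (some '' W))} ⊆ S := by
    simp only [ConstInvLimit.mem_nhds_of_forall_eq_fixed hbij.injective hcont p hp,
      ((ZfilterTop.hasBasis_nhds_none F).map _).comap _ |>.mem_iff, Set.image_insert_eq,
      iterate_fixed hinf]
    rfl
  refine ⟨fun x hx => ?_, fun hopen => ?_, hnhds⟩
  · obtain ⟨m, hm⟩ : ∃ m, x.1 0 = some m := Option.ne_none_iff_exists'.mp fun h =>
      hx (ConstInvLimit.eval_zero_injective hbij.injective (h.trans (hp 0).symm))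
    refine ConstInvLimit.isOpen_singleton_of_isOpen_singleton_eval_zero hbij.injective ?_
    rw [hm]
    exact ZfilterTop.isOpen_singleton_some F m
  · obtain ⟨k, W, hW, hWp⟩ := (hnhds _).1 (hopen.mem_nhds rfl)
    obtain ⟨m, hm⟩ := nonempty_of_mem hW
    obtain ⟨x, hx⟩ : ∃ x : ConstInvLimit f, x.1 0 = f^[k] (some m) :=
      ConstInvLimit.eval_zero_surjective hbij.surjective (f^[k] (some m))
    have hxp : x = p := hWp (Or.inr ⟨some m, ⟨m, hm, rfl⟩, hx.symm⟩)
    have : f^[k] (some m) = f^[k] none := by rw [← hx, hxp, hp 0, iterate_fixed hinf]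
    exact Option.some_ne_none m ((hbij.injective.iterate k) this)

/-- Proposition 6.4: for a continuous bijection `f : Z(F) → Z(F)` fixing `∞`, the
constant thread `p = ∞` is the only non-isolated point of `lim← {Z; f}`, and its
neighborhood filter is generated by the sets `π₁⁻¹(f^k(W))`, `W ∈ F`, `k ∈ ℕ`. -/
theorem stmt12 (F : Filter ℕ) [F.NeBot] (hfree : F ≤ Filter.cofinite)
    [t : TopologicalSpace (Option ℕ)] (ht : t = ZfilterTop F)
    (f : Option ℕ → Option ℕ) (hcont : Continuous f)
    (hbij : Function.Bijective f) (hinf : f none = none)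
    (p : {x : ℕ → Option ℕ // ∀ n, x n = f (x (n + 1))})
    (hp : ∀ n, p.1 n = none) :
    (∀ x : {x : ℕ → Option ℕ // ∀ n, x n = f (x (n + 1))},
        x ≠ p → IsOpen ({x} : Set {x : ℕ → Option ℕ // ∀ n, x n = f (x (n + 1))})) ∧
    ¬ IsOpen ({p} : Set {x : ℕ → Option ℕ // ∀ n, x n = f (x (n + 1))}) ∧
    (∀ S : Set {x : ℕ → Option ℕ // ∀ n, x n = f (x (n + 1))},
        S ∈ nhds p ↔ ∃ k : ℕ, ∃ W ∈ F,
          {x : {x : ℕ → Option ℕ // ∀ n, x n = f (x (n + 1))} |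
            x.1 0 ∈ insert none (f^[k] '' (some '' W))} ⊆ S) :=
  stmt12_general F (t := t) ht f hcont hbij hinf p hp
end

section
/- Let F be a filter on ℕ, Z = Z(F), and f : Z → Z a continuous, closed surjection with f(∞) = ∞. Let X_∞ = lim← {Z; f}, pick x_n ∈ π_1^{-1}(n) for each n ∈ ℕ, and let p ∈ X_∞ be the constant thread ∞. Then the map i : Z → X_∞ with i(n) = x_n and i(∞) = p is a topological embedding. -/
/-- Any set of isolated points is open in `Z(F)`. -/
lemma Zf_isOpen_of_not_mem (F : Filter ℕ) {S : Set (Option ℕ)} (h : none ∉ S) :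
    @IsOpen _ (ZfilterTop F) S := by
  letI := ZfilterTop F
  have hS : S = ⋃ n ∈ {n : ℕ | some n ∈ S}, ({some n} : Set (Option ℕ)) := by
    ext o
    cases o with
    | none => simp [h]
    | some m => simp
  rw [hS]
  exact isOpen_biUnion fun n _ =>
    TopologicalSpace.isOpen_generateFrom_of_mem (Or.inl ⟨n, rfl⟩)

lemma Zf_isOpen_insert (F : Filter ℕ) {A : Set ℕ} (hA : A ∈ F) :
    @IsOpen _ (ZfilterTop F) (insert none (some '' A)) :=
  TopologicalSpace.isOpen_generateFrom_of_mem (Or.inr ⟨A, hA, rfl⟩)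

/-- If `S` is open in `Z(F)` and contains `∞`, its trace on `ℕ` is in `F`. -/
lemma Zf_mem_F_of_isOpen (F : Filter ℕ) {S : Set (Option ℕ)}
    (h : @IsOpen _ (ZfilterTop F) S) (hn : none ∈ S) : {n : ℕ | some n ∈ S} ∈ F := by
  change TopologicalSpace.GenerateOpen _ S at h
  revert hn
  induction h with
  | basic U hU =>
      intro hn
      rcases hU with ⟨m, rfl⟩ | ⟨A, hA, rfl⟩
      · simp at hn
      · refine Filter.mem_of_superset hA fun n hn' => ?_
        simp [Set.mem_insert_iff, hn']
  | univ => intro _; simpa using Filter.univ_mem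
  | inter U V _ _ ihU ihV =>
      intro hn
      exact Filter.inter_mem (ihU hn.1) (ihV hn.2)
  | sUnion 𝒮 _ ih =>
      intro hn
      rcases hn with ⟨U, hU𝒮, hnU⟩
      exact Filter.mem_of_superset (ih U hU𝒮 hnU) fun n hn' => ⟨U, hU𝒮, hn'⟩

/-- The key inductive step: a pointwise lift along `f` of a continuous map
(never hitting `∞` on `ℕ` and fixing `∞`) is continuous. -/
lemma Zf_step (F : Filter ℕ) (f : Option ℕ → Option ℕ)
    (hclosed : @IsClosedMap _ _ (ZfilterTop F) (ZfilterTop F) f)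
    (hinf : f none = none)
    (g h : Option ℕ → Option ℕ)
    (hg : @Continuous _ _ (ZfilterTop F) (ZfilterTop F) g)
    (hg0 : g none = none) (hgn : ∀ n, g (some n) ≠ none)
    (hfh : ∀ o, f (h o) = g o) (hh0 : h none = none) :
    @Continuous _ _ (ZfilterTop F) (ZfilterTop F) h ∧ ∀ n, h (some n) ≠ none := by
  letI := ZfilterTop F
  have hhn : ∀ n, h (some n) ≠ none := by
    intro n hcon
    exact hgn n (by rw [← hfh (some n), hcon, hinf])
  refine ⟨?_, hhn⟩
  have : @Continuous _ _ (ZfilterTop F)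
      (TopologicalSpace.generateFrom
        ({U | ∃ n : ℕ, U = {some n}} ∪ {U | ∃ A ∈ F, U = insert none (some '' A)})) h := by
    rw [continuous_generateFrom_iff]
    rintro U hUmem
    rcases hUmem with ⟨m, rfl⟩ | ⟨A, hA, rfl⟩
    · -- preimage of an isolated point
      refine Zf_isOpen_of_not_mem F ?_
      simp only [Set.mem_preimage, hh0]
      simp
    · -- preimage of a basic neighborhood of ∞
      set U : Set (Option ℕ) := insert none (some '' A) with hU
      -- the "bad" set of values of h outside A
      set M : Set ℕ := {m | m ∉ A ∧ ∃ n, h (some n) = some m} with hM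
      have hMcompl : (some '' M)ᶜ = insert none (some '' Mᶜ) := by
        ext o
        cases o with
        | none => simp
        | some m => simp
      have hMclosed : @IsClosed _ (ZfilterTop F) (some '' M) := by
        rw [← isOpen_compl_iff, hMcompl]
        exact Zf_isOpen_insert F (Filter.mem_of_superset hA fun n hn hn' => hn'.1 hn)
      have hD : @IsClosed _ (ZfilterTop F) (f '' (some '' M)) := hclosed _ hMclosed
      have hnoneD : none ∉ f '' (some '' M) := by
        rintro ⟨o, ⟨m, hmM, rfl⟩, hfo⟩
        rcases hmM.2 with ⟨n, hn⟩
        exact hgn n (by rw [← hfh (some n), hn, hfo])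
      have hB : {b : ℕ | some b ∈ (f '' (some '' M))ᶜ} ∈ F :=
        Zf_mem_F_of_isOpen F hD.isOpen_compl hnoneD
      set B : Set ℕ := {b : ℕ | some b ∈ (f '' (some '' M))ᶜ} with hBdef
      have hV : @IsOpen _ (ZfilterTop F) (g ⁻¹' insert none (some '' B)) :=
        hg.isOpen_preimage _ (Zf_isOpen_insert F hB)
      have hnV : none ∈ g ⁻¹' insert none (some '' B) := by
        simp [Set.mem_preimage, hg0]
      have hC : {n : ℕ | some n ∈ g ⁻¹' insert none (some '' B)} ∈ F :=
        Zf_mem_F_of_isOpen F hV hnV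
      -- every n in that set satisfies h (some n) ∈ U
      have hsub : {n : ℕ | some n ∈ g ⁻¹' insert none (some '' B)}
          ⊆ {n : ℕ | some n ∈ h ⁻¹' U} := by
        intro n hn
        simp only [Set.mem_setOf_eq, Set.mem_preimage, Set.mem_insert_iff] at hn ⊢
        rcases hn with hn | ⟨b, hbB, hb⟩
        · exact absurd hn (hgn n)
        · -- g (some n) = some b with b ∈ B
          cases hhm : h (some n) with
          | none => exact absurd hhm (hhn n)
          | some m =>
              by_cases hmA : m ∈ A
              · exact Or.inr ⟨m, hmA, rfl⟩
              · exfalso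
                apply hbB
                refine ⟨some m, ⟨m, ⟨hmA, n, hhm⟩, rfl⟩, ?_⟩
                rw [← hhm, hfh (some n), hb]
      -- conclude openness of the preimage
      have hSA : {n : ℕ | some n ∈ h ⁻¹' U} ∈ F := Filter.mem_of_superset hC hsub
      have hdecomp : h ⁻¹' U = insert none (some '' {n : ℕ | some n ∈ h ⁻¹' U})
          ∪ (h ⁻¹' U ∩ {o | o ≠ none}) := by
        ext o
        cases o with
        | none =>
            simp only [Set.mem_preimage, hh0, Set.mem_union, Set.mem_insert_iff]
            simp [hU]
        | some m =>
            constructor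
            · intro hmem
              exact Or.inr ⟨hmem, by simp⟩
            · rintro (hmem | ⟨hmem, _⟩)
              · rcases hmem with hmem | ⟨n, hn, hn'⟩
                · simp at hmem
                · rw [show m = n from (Option.some_injective ℕ hn'.symm)]; exact hn
              · exact hmem
      rw [hdecomp]
      exact IsOpen.union (Zf_isOpen_insert F hSA)
        (Zf_isOpen_of_not_mem F (fun hcon => hcon.2 rfl))
  exact this

/-- Proposition 6.3: for a continuous closed surjection `f : Z(F) → Z(F)` fixing
`∞`, picking `x n ∈ π₁⁻¹(n)` and `p` the constant thread `∞`, the map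
`n ↦ x n`, `∞ ↦ p` is an embedding of `Z(F)` into `lim← {Z; f}`. -/
theorem stmt13 (F : Filter ℕ) [F.NeBot] (hfree : F ≤ Filter.cofinite)
    [t : TopologicalSpace (Option ℕ)] (ht : t = ZfilterTop F)
    (f : Option ℕ → Option ℕ) (hcont : Continuous f) (hclosed : IsClosedMap f)
    (hsurj : Function.Surjective f) (hinf : f none = none)
    (x : ℕ → {z : ℕ → Option ℕ // ∀ n, z n = f (z (n + 1))})
    (hx : ∀ n, (x n).1 0 = some n)
    (p : {z : ℕ → Option ℕ // ∀ n, z n = f (z (n + 1))})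
    (hp : ∀ n, p.1 n = none) :
    Topology.IsEmbedding (fun o : Option ℕ => o.elim p x) := by
  subst ht
  letI : TopologicalSpace (Option ℕ) := ZfilterTop F
  -- the coordinate maps
  set G : ℕ → Option ℕ → Option ℕ := fun k o => (o.elim p x).1 k with hG
  have key : ∀ k, Continuous (G k) ∧ ∀ n, G k (some n) ≠ none := by
    intro k
    induction k with
    | zero =>
        have hid : G 0 = id := by
          funext o
          cases o with
          | none => simpa [hG] using hp 0
          | some n => simpa [hG] using hx n
        rw [hid]
        exact ⟨continuous_id, fun n => by simp⟩
    | succ k ih =>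
        refine Zf_step F f hclosed hinf (G k) (G (k + 1)) ih.1 ?_ ih.2 ?_ ?_
        · simpa [hG] using hp k
        · intro o
          cases o with
          | none => exact (p.2 k).symm
          | some n => exact ((x n).2 k).symm
        · simpa [hG] using hp (k + 1)
  -- continuity of the map into the inverse limit
  have hctsi : Continuous (fun o : Option ℕ => o.elim p x) := by
    apply Continuous.subtype_mk
    exact continuous_pi fun k => (key k).1
  -- the first projection is a continuous left inverse
  have hleft : Function.LeftInverse
      (fun z : {z : ℕ → Option ℕ // ∀ n, z n = f (z (n + 1))} => z.1 0)
      (fun o : Option ℕ => o.elim p x) := by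
    intro o
    cases o with
    | none => exact hp 0
    | some n => exact hx n
  exact hleft.isEmbedding ((continuous_apply 0).comp continuous_subtype_val) hctsi
end

section
/- Let {X_n; f_n^{n+1}} be an inverse sequence of countable regular spaces, each with analytic topology and each a q⁺ space. Then every countable subspace of the inverse limit X_∞ is a q⁺ space. -/
/-!
Fix `x ∈ closure A` and the finite pieces `F n` of `A`, and call `B ⊆ ℕ` large when the pieces
indexed by `B` still accumulate at `x`. Unless `x` is in the closure of a single point of `A`,
large sets are infinite and form a coideal. Every large set splits into two large halves: otherwise
the large sets would induce a nonprincipal ultrafilter on `ℕ`, and since closure in the inverse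
limit is tested coordinatewise, analyticity of the topologies of the `X k` would make that
ultrafilter analytic, hence Baire measurable, which coordinate flips of `2^ℕ` rule out.
Splitting repeatedly gives disjoint large sets `B k`; the q⁺ property of `X k` yields a selector
from the pieces indexed by `B k` whose `k`-th coordinates accumulate at `x k`, and the union of
these selectors is the required selector.
-/

/-- A topology on `X` is analytic if, viewed as a subset of the Cantor cube
`2^X = X → Bool` (via characteristic functions), it is an analytic set. -/
def IsAnalyticTopology (X : Type*) [TopologicalSpace X] : Prop :=
  MeasureTheory.AnalyticSet {χ : X → Bool | IsOpen {x | χ x = true}}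

/-- A space is q⁺ if for every `A`, every `x ∈ closure A` and every partition of
`A` into finite sets `(F n)`, there is a partial selector `S ⊆ A` (meeting each
`F n` in at most one point) with `x ∈ closure S`. -/
def QPlusSpace (X : Type*) [TopologicalSpace X] : Prop :=
  ∀ (A : Set X) (x : X), x ∈ closure A →
    ∀ F : ℕ → Set X, (∀ n, (F n).Finite) →
      (Pairwise fun i j => Disjoint (F i) (F j)) → (⋃ n, F n) = A →
      ∃ S ⊆ A, x ∈ closure S ∧ ∀ n, (S ∩ F n).Subsingleton

open Set Filter Function Topology MeasureTheory

-- Instance search does not find this through the generic separable, completely metrizable case.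
instance polishSpace_pi_bool {ι : Type*} [Countable ι] : PolishSpace (ι → Bool) := {}

open Classical in
noncomputable def flipOn {ι : Type*} (G : Set ι) : (ι → Bool) ≃ₜ (ι → Bool) where
  toFun β i := if i ∈ G then !β i else β i
  invFun β i := if i ∈ G then !β i else β i
  left_inv β := by funext i; by_cases h : i ∈ G <;> simp [h]
  right_inv β := by funext i; by_cases h : i ∈ G <;> simp [h]
  continuous_toFun := continuous_pi fun i =>
    (continuous_of_discreteTopology (f := fun b : Bool => if i ∈ G then !b else b)).comp
      (continuous_apply i)
  continuous_invFun := continuous_pi fun i =>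
    (continuous_of_discreteTopology (f := fun b : Bool => if i ∈ G then !b else b)).comp
      (continuous_apply i)

open Classical in
theorem flipOn_apply {ι : Type*} (G : Set ι) (β : ι → Bool) (i : ι) :
    flipOn G β i = if i ∈ G then !β i else β i :=
  rfl

theorem setOf_flipOn_univ {ι : Type*} (β : ι → Bool) :
    {i | flipOn univ β i = true} = {i | β i = true}ᶜ := by
  ext i; simp [flipOn_apply]

theorem setOf_inter_setOf_flipOn_compl_subset {ι : Type*} (I : Set ι) (β : ι → Bool) :
    {i | β i = true} ∩ {i | flipOn Iᶜ β i = true} ⊆ I := by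
  rintro i ⟨h, h'⟩
  by_contra hi
  simp_all [flipOn_apply]

theorem Ultrafilter.not_analyticSet_setOf_mem (U : Ultrafilter ℕ)
    (hU : (U : Filter ℕ) ≤ cofinite) :
    ¬ AnalyticSet {β : ℕ → Bool | {n | β n = true} ∈ U} := by
  set 𝒰 := {β : ℕ → Bool | {n | β n = true} ∈ U}
  intro h𝒰
  have hcompl : 𝒰ᶜ = flipOn univ ⁻¹' 𝒰 := by
    ext β
    simp [𝒰, setOf_flipOn_univ, Ultrafilter.compl_mem_iff_notMem]
  borelize (ℕ → Bool)
  obtain ⟨O, hO, h𝒰O⟩ := (h𝒰.measurableSet_of_compl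
    (hcompl ▸ h𝒰.preimage (flipOn univ).continuous)).residualEq_isOpen
  have hgeneric : ∀ G : Set ℕ, ∀ᶠ β in residual (ℕ → Bool),
      (β ∈ 𝒰 ↔ β ∈ O) ∧ (flipOn G β ∈ 𝒰 ↔ flipOn G β ∈ O) := by
    intro G
    have h := h𝒰O.mem_iff
    rw [← (flipOn G).residual_map_eq] at h
    exact h𝒰O.mem_iff.and (eventually_map.1 h)
  rcases O.eq_empty_or_nonempty with rfl | ⟨a, haO⟩
  · obtain ⟨β, hβ, hβ'⟩ := (dense_of_mem_residual (hgeneric univ)).nonempty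
    have hβ𝒰 : β ∈ 𝒰ᶜ := fun h => hβ.1 h
    rw [hcompl] at hβ𝒰
    exact hβ'.1 hβ𝒰
  · -- Flipping outside `I` preserves a cylinder `⊆ O` over `I`, so a generic `β` in it and its
    -- flip both lie in `𝒰`, although their supports meet only inside the finite set `I`.
    obtain ⟨I, u, hu, hIO⟩ := isOpen_pi_iff.1 hO a haO
    have hcyl : IsOpen ((I : Set ℕ).pi u) :=
      isOpen_set_pi I.finite_toSet fun n hn => (hu n hn).1
    obtain ⟨β, hβcyl, hβ, hβ'⟩ :=
      (dense_of_mem_residual (hgeneric (↑I)ᶜ)).inter_open_nonempty _ hcyl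
        ⟨a, fun n hn => (hu n hn).2⟩
    have hflipcyl : flipOn (↑I)ᶜ β ∈ (I : Set ℕ).pi u := fun n hn => by
      simpa [flipOn_apply, hn] using hβcyl n hn
    have hI : (I : Set ℕ) ∈ U := mem_of_superset
      (inter_mem (hβ.2 (hIO hβcyl)) (hβ'.2 (hIO hflipcyl)))
      (setOf_inter_setOf_flipOn_compl_subset _ β)
    exact Ultrafilter.compl_notMem_iff.2 hI (hU I.finite_toSet.compl_mem_cofinite)

/-- If `C` could not be split, `{B | P (B ∩ C)}` would be a nonprincipal ultrafilter, which `hana`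
makes analytic. -/
theorem exists_split_of_analyticSet {P : Set ℕ → Prop} (hmono : Monotone P)
    (hunion : ∀ B B', P (B ∪ B') → P B ∨ P B') (hfin : ∀ B, B.Finite → ¬ P B)
    (hana : AnalyticSet {β : ℕ → Bool | ¬ P {n | β n = true}}) {C : Set ℕ} (hC : P C) :
    ∃ B ⊆ C, P B ∧ P (C \ B) := by
  classical
  by_contra! hns
  have hultra : ∀ s, P (s ∩ C) ↔ ¬ P (sᶜ ∩ C) := by
    intro s
    have hdiff : C \ (s ∩ C) = sᶜ ∩ C := by ext; simp [and_comm]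
    refine ⟨fun h => hdiff ▸ hns _ inter_subset_right h, fun h => ?_⟩
    have hcover : s ∩ C ∪ sᶜ ∩ C = C := by
      rw [← union_inter_distrib_right, union_compl_self, univ_inter]
    exact (hunion _ _ (by rwa [hcover])).resolve_right h
  let 𝓕 : Filter ℕ :=
    { sets := {B | P (B ∩ C)}
      univ_sets := by simpa using hC
      sets_of_superset := fun h hst => hmono (inter_subset_inter_left C hst) h
      inter_sets := fun {B B'} hB hB' => by
        show P (B ∩ B' ∩ C)
        rw [hultra, compl_inter, union_inter_distrib_right]
        intro h
        rcases hunion _ _ h with h | h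
        exacts [(hultra B).1 hB h, (hultra B').1 hB' h] }
  let U := Ultrafilter.ofComplNotMemIff 𝓕 fun s => (hultra s).symm
  refine U.not_analyticSet_setOf_mem
    (fun s hs => (hultra s).2 (hfin _ ((mem_cofinite.1 hs).subset inter_subset_left))) ?_
  have hU : {β : ℕ → Bool | {n | β n = true} ∈ U} =
      (fun β n => !β n && decide (n ∈ C)) ⁻¹' {γ | ¬ P {n | γ n = true}} := by
    ext β
    have hset : {n | (!β n && decide (n ∈ C)) = true} = {n | β n = true}ᶜ ∩ C := by
      ext n; simp
    show P ({n | β n = true} ∩ C) ↔ ¬ P {n | (!β n && decide (n ∈ C)) = true}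
    rw [hset, hultra]
  rw [hU]
  exact hana.preimage (continuous_pi fun n =>
    (continuous_of_discreteTopology (f := fun b : Bool => !b && decide (n ∈ C))).comp
      (continuous_apply n))

theorem exists_pairwise_disjoint_of_forall_split {α : Type*} {P : Set α → Prop}
    (hsplit : ∀ C, P C → ∃ B ⊆ C, P B ∧ P (C \ B)) {C : Set α} (hC : P C) :
    ∃ B : ℕ → Set α, (∀ k, P (B k)) ∧ Pairwise (Disjoint on B) := by
  choose piece hsub hpiece hrest using hsplit
  let rest : ℕ → {D // P D} :=
    fun k => Nat.rec ⟨C, hC⟩ (fun _ D => ⟨D.1 \ piece D.1 D.2, hrest D.1 D.2⟩) k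
  have hanti : Antitone fun k => (rest k).1 := antitone_nat_of_succ_le fun _ => sdiff_subset
  refine ⟨fun k => piece (rest k).1 (rest k).2, fun k => hpiece _ _,
    (pairwise_disjoint_on _).2 fun j k hjk => ?_⟩
  exact disjoint_sdiff_right.mono_right ((hsub _ _).trans (hanti (Nat.succ_le_of_lt hjk)))

theorem mem_closure_iff_forall_mem_closure_image_eval {X : ℕ → Type*}
    [∀ n, TopologicalSpace (X n)] {f : ∀ n, X (n + 1) → X n} (hf : ∀ n, Continuous (f n))
    {Z : Type*} [TopologicalSpace Z] {e : Z → ∀ n, X n} (he : IsInducing e)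
    (he_compat : ∀ z n, e z n = f n (e z (n + 1))) {S : Set Z} {z : Z} :
    z ∈ closure S ↔ ∀ k, e z k ∈ closure ((fun s => e s k) '' S) := by
  -- The coordinate neighbourhood filters decrease with `k`, so their infimum is directed.
  have hnhds : 𝓝 z = ⨅ k, comap (fun s => e s k) (𝓝 (e z k)) := by
    simp only [he.nhds_eq_comap, nhds_pi, Filter.pi, comap_iInf, comap_comap]
    rfl
  have hanti : Antitone fun k => comap (fun s => e s k) (𝓝 (e z k)) :=
    antitone_nat_of_succ_le fun k => by
      have hk : (fun s => e s k) = f k ∘ fun s => e s (k + 1) := funext fun s => he_compat s k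
      rw [hk, ← comap_comap, he_compat z k]
      exact comap_mono (tendsto_iff_comap.1 ((hf k).tendsto _))
  refine ⟨fun h k => map_mem_closure ((continuous_apply k).comp he.continuous) h
    (mapsTo_image _ _), fun h => mem_closure_iff_nhds.2 fun t ht => ?_⟩
  rw [hnhds] at ht
  obtain ⟨k, hk⟩ := (mem_iInf_of_directed hanti.directed_ge t).1 ht
  obtain ⟨V, hV, hVt⟩ := mem_comap.1 hk
  obtain ⟨_, hyV, s, hs, rfl⟩ := mem_closure_iff_nhds.1 (h k) V hV
  exact ⟨s, hVt hyV, hs⟩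

theorem IsAnalyticTopology.analyticSet_setOf_notMem_closure {X : Type*} [TopologicalSpace X]
    [Countable X] (hX : IsAnalyticTopology X) (x : X) (s : ℕ → Set X) :
    AnalyticSet {β : ℕ → Bool | x ∉ closure (⋃ n ∈ {n | β n = true}, s n)} := by
  set K : Set ((ℕ → Bool) × (X → Bool)) :=
    {q | q.2 x = true ∧ ∀ n, ∀ a ∈ s n, q.1 n = true → q.2 a = false}
  have hK : IsClosed K := by
    simp only [K, ofPred_and, ofPred_forall]
    refine (isClosed_eq (by fun_prop) continuous_const).inter
      (isClosed_iInter fun n => isClosed_iInter fun a => isClosed_iInter fun _ => ?_)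
    exact (isClosed_discrete {b : Bool × Bool | b.1 = true → b.2 = false}).preimage
      (f := fun q : (ℕ → Bool) × (X → Bool) => (q.1 n, q.2 a)) (by fun_prop)
  have hset : {β : ℕ → Bool | x ∉ closure (⋃ n ∈ {n | β n = true}, s n)} =
      Prod.fst '' (Prod.snd ⁻¹' {χ : X → Bool | IsOpen {x | χ x = true}} ∩ K) := by
    ext β
    simp only [K, mem_image, mem_inter_iff, mem_preimage, mem_ofPred_eq, Prod.exists,
      exists_and_right, exists_eq_right, mem_closure_iff, not_forall, not_nonempty_iff_eq_empty,
      exists_prop]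
    constructor
    · rintro ⟨V, ⟨hV, hxV⟩, hVS⟩
      classical
      refine ⟨fun y => decide (y ∈ V), by simpa using hV, by simpa using hxV,
        fun n a ha hn => ?_⟩
      simpa using fun haV => (hVS.subset ⟨haV, mem_biUnion hn ha⟩ : a ∈ ∅)
    · rintro ⟨χ, hχ, hχx, hχS⟩
      refine ⟨{y | χ y = true}, ⟨hχ, hχx⟩,
        eq_empty_of_forall_notMem fun a ⟨ha, haS⟩ => ?_⟩
      obtain ⟨n, hn, haF⟩ := mem_iUnion₂.1 haS
      simp [hχS n a haF hn] at ha
  rw [hset, inter_eq_iInter]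
  refine (AnalyticSet.iInter fun b => ?_).image_of_continuous continuous_fst
  cases b
  exacts [hK.analyticSet, hX.preimage continuous_snd]

theorem QPlusSpace.exists_selector_of_mem_closure_image {Z X : Type*} [TopologicalSpace X]
    (hX : QPlusSpace X) (p : Z → X) {A : Set Z} {x : X} (hx : x ∈ closure (p '' A))
    {F : ℕ → Set Z} (hF : ∀ n, (F n).Finite) (hFdisj : Pairwise (Disjoint on F))
    (hAF : A ⊆ ⋃ n, F n) :
    ∃ T ⊆ A, x ∈ closure (p '' T) ∧ ∀ n, (T ∩ F n).Subsingleton := by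
  -- Transport the partition to `p '' A` along a section `σ` of `p` over `A`.
  obtain ⟨-, z, -, -⟩ := closure_nonempty_iff.1 ⟨x, hx⟩
  have : Nonempty Z := ⟨z⟩
  set σ := invFunOn p A
  have hσA : MapsTo σ (p '' A) A := fun u hu => invFunOn_mem hu
  have hpσ : LeftInvOn p σ (p '' A) := fun u hu => invFunOn_eq hu
  set G : ℕ → Set X := fun n => p '' A ∩ σ ⁻¹' F n
  have hGfin : ∀ n, (G n).Finite := fun n =>
    Finite.of_finite_image ((hF n).subset (image_subset_iff.2 fun u hu => hu.2))
      (hpσ.injOn.mono inter_subset_left)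
  have hGdisj : Pairwise (Disjoint on G) := fun i j hij =>
    ((hFdisj hij).preimage σ).mono inter_subset_right inter_subset_right
  have hGU : ⋃ n, G n = p '' A := by
    rw [← inter_iUnion, ← preimage_iUnion]
    exact inter_eq_left.2 fun u hu => hAF (hσA hu)
  obtain ⟨T', hT'A, hxT', hT'sel⟩ := hX _ x hx G hGfin hGdisj hGU
  refine ⟨σ '' T', (hσA.mono_left hT'A).image_subset, ?_, fun n => ?_⟩
  · rwa [image_image, image_congr fun u hu => hpσ (hT'A hu), image_id']
  · rintro _ ⟨⟨u, hu, rfl⟩, huF⟩ _ ⟨⟨v, hv, rfl⟩, hvF⟩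
    rw [hT'sel n ⟨hu, hT'A hu, huF⟩ ⟨hv, hT'A hv, hvF⟩]

theorem subsingleton_iUnion_inter_of_pairwise_disjoint {Z : Type*} {F : ℕ → Set Z}
    (hF : Pairwise (Disjoint on F)) {B : ℕ → Set ℕ} (hB : Pairwise (Disjoint on B))
    {T : ℕ → Set Z} (hTB : ∀ k, T k ⊆ ⋃ n ∈ B k, F n)
    (hT : ∀ k n, (T k ∩ F n).Subsingleton) (n : ℕ) : ((⋃ k, T k) ∩ F n).Subsingleton := by
  have hindex : ∀ k, ∀ a ∈ T k ∩ F n, n ∈ B k := by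
    rintro k a ⟨haT, haF⟩
    obtain ⟨m, hm, haF'⟩ := mem_iUnion₂.1 (hTB k haT)
    rwa [hF.eq (not_disjoint_iff.2 ⟨a, haF, haF'⟩)]
  rintro a ⟨haT, haF⟩ b ⟨hbT, hbF⟩
  obtain ⟨k, hak⟩ := mem_iUnion.1 haT
  obtain ⟨j, hbj⟩ := mem_iUnion.1 hbT
  obtain rfl : k = j :=
    hB.eq (not_disjoint_iff.2 ⟨n, hindex k a ⟨hak, haF⟩, hindex j b ⟨hbj, hbF⟩⟩)
  exact hT k n ⟨hak, haF⟩ ⟨hbj, hbF⟩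

theorem analyticSet_setOf_notMem_closure_biUnion {X : ℕ → Type*}
    [∀ n, TopologicalSpace (X n)] [∀ n, Countable (X n)] (hA : ∀ n, IsAnalyticTopology (X n))
    {f : ∀ n, X (n + 1) → X n} (hf : ∀ n, Continuous (f n)) {Z : Type*} [TopologicalSpace Z]
    {e : Z → ∀ n, X n} (he : IsInducing e) (he_compat : ∀ z n, e z n = f n (e z (n + 1)))
    (z : Z) (F : ℕ → Set Z) :
    AnalyticSet {β : ℕ → Bool | z ∉ closure (⋃ n ∈ {n | β n = true}, F n)} := by
  have hset : {β : ℕ → Bool | z ∉ closure (⋃ n ∈ {n | β n = true}, F n)} =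
      ⋃ k, {β | e z k ∉ closure (⋃ n ∈ {n | β n = true}, (e · k) '' F n)} := by
    ext β
    simp only [mem_ofPred_eq, mem_iUnion, mem_closure_iff_forall_mem_closure_image_eval hf he
      he_compat, not_forall, image_iUnion₂]
  rw [hset]
  exact AnalyticSet.iUnion fun k => (hA k).analyticSet_setOf_notMem_closure _ _

theorem notMem_closure_biUnion_of_finite {Z : Type*} [TopologicalSpace Z] {x : Z}
    {F : ℕ → Set Z} (hF : ∀ n, (F n).Finite) (hx : ∀ a ∈ ⋃ n, F n, x ∉ closure {a})
    {B : Set ℕ} (hB : B.Finite) : x ∉ closure (⋃ n ∈ B, F n) := by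
  rw [← biUnion_of_singleton (⋃ n ∈ B, F n), (hB.biUnion fun n _ => hF n).closure_biUnion,
    mem_iUnion₂]
  rintro ⟨a, ha, hxa⟩
  exact hx a (iUnion₂_subset_iUnion _ _ ha) hxa

theorem stmt16_general (X : ℕ → Type*) [∀ n, TopologicalSpace (X n)]
    [∀ n, Countable (X n)]
    (hA : ∀ n, IsAnalyticTopology (X n))
    (f : ∀ n, X (n + 1) → X n) (hf : ∀ n, Continuous (f n))
    (hq : ∀ n, QPlusSpace (X n)) :
    ∀ Y : Set {x : ∀ n, X n // ∀ n, x n = f n (x (n + 1))},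
      Y.Countable → QPlusSpace ↥Y := by
  intro Y _ A x hx F hFfin hFdisj hFA
  let e : Y → ∀ n, X n := fun y => y.1.1
  have he : IsInducing e := IsInducing.subtypeVal.comp IsInducing.subtypeVal
  have he_compat : ∀ y n, e y n = f n (e y (n + 1)) := fun y => y.1.2
  by_cases hsing : ∃ a ∈ A, x ∈ closure {a}
  · obtain ⟨a, ha, hxa⟩ := hsing
    exact ⟨{a}, singleton_subset_iff.2 ha, hxa,
      fun n => subsingleton_singleton.anti inter_subset_left⟩
  push Not at hsing
  let P : Set ℕ → Prop := fun B => x ∈ closure (⋃ n ∈ B, F n)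
  have hmono : Monotone P := fun B B' h hB => closure_mono (biUnion_subset_biUnion_left h) hB
  have hunion : ∀ B B', P (B ∪ B') → P B ∨ P B' := fun B B' h => by
    have h' : x ∈ closure (⋃ n ∈ B ∪ B', F n) := h
    rwa [biUnion_union, closure_union] at h'
  have hsplit : ∀ C, P C → ∃ B ⊆ C, P B ∧ P (C \ B) := fun C =>
    exists_split_of_analyticSet hmono hunion
      (fun _ => notMem_closure_biUnion_of_finite hFfin (hFA ▸ hsing))
      (analyticSet_setOf_notMem_closure_biUnion hA hf he he_compat x F)
  obtain ⟨B, hBP, hBdisj⟩ := exists_pairwise_disjoint_of_forall_split hsplit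
    (C := univ) (by simpa [P, hFA] using hx)
  have hcl := fun S =>
    mem_closure_iff_forall_mem_closure_image_eval (S := S) (z := x) hf he he_compat
  choose T hTB hxT hTsel using fun k => (hq k).exists_selector_of_mem_closure_image (e · k)
    ((hcl _).1 (hBP k) k) hFfin hFdisj (iUnion₂_subset_iUnion _ _)
  exact ⟨⋃ k, T k, iUnion_subset fun k => (hTB k).trans (hFA ▸ iUnion₂_subset_iUnion _ _),
    (hcl _).2 fun k => closure_mono (image_mono (subset_iUnion T k)) (hxT k),
    subsingleton_iUnion_inter_of_pairwise_disjoint hFdisj hBdisj hTB hTsel⟩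

/-- Theorem 3.5: for an inverse sequence of countable regular q⁺ spaces with
analytic topologies, every countable subspace of the inverse limit is q⁺. -/
theorem stmt16 (X : ℕ → Type*) [∀ n, TopologicalSpace (X n)]
    [∀ n, Countable (X n)] [∀ n, RegularSpace (X n)]
    (hA : ∀ n, IsAnalyticTopology (X n))
    (f : ∀ n, X (n + 1) → X n) (hf : ∀ n, Continuous (f n))
    (hq : ∀ n, QPlusSpace (X n)) :
    ∀ Y : Set {x : ∀ n, X n // ∀ n, x n = f n (x (n + 1))},
      Y.Countable → QPlusSpace ↥Y :=
  stmt16_general X hA f hf hq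
end

section
/- Let {X_n; f_n^{n+1}} be an inverse sequence of countable spaces with analytic topologies. Then the topology of any countable subspace of X_∞ is analytic. Moreover, if each X_n has an F_σ base, then every countable subspace of X_∞ has an F_σ base. -/
/-- A space has an F_σ base if it has a base of open sets which, viewed as a subset
of the Cantor cube `X → Bool`, is a countable union of closed sets. -/
def HasFsigmaBase (X : Type*) [TopologicalSpace X] : Prop :=
  ∃ B : Set (X → Bool),
    TopologicalSpace.IsTopologicalBasis ((fun χ => {x | χ x = true}) '' B) ∧
    ∃ C : ℕ → Set (X → Bool), (∀ n, IsClosed (C n)) ∧ B = ⋃ n, C n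


open MeasureTheory Set TopologicalSpace Topology Filter

section InverseLimit

variable {X : ℕ → Type*} [∀ n, TopologicalSpace (X n)] {f : ∀ n, X (n + 1) → X n}
  {Z : Type*} {p : ∀ n, Z → X n}

theorem nhds_eq_iInf_comap_of_isInducing [TopologicalSpace Z] (hp : IsInducing fun z n => p n z)
    (z : Z) : 𝓝 z = ⨅ n, comap (p n) (𝓝 (p n z)) := by
  rw [hp.nhds_eq_comap, nhds_pi, Filter.pi, comap_iInf]
  simp only [comap_comap]
  rfl

theorem antitone_comap_nhds (hf : ∀ n, Continuous (f n))
    (hpf : ∀ n z, p n z = f n (p (n + 1) z)) (z : Z) :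
    Antitone fun n => comap (p n) (𝓝 (p n z)) := by
  refine antitone_nat_of_succ_le fun n => ?_
  have hpn : p n = f n ∘ p (n + 1) := funext (hpf n)
  rw [hpn, ← comap_comap]
  exact comap_mono ((hf n).tendsto _).le_comap

theorem isTopologicalBasis_iUnion_image_preimage [TopologicalSpace Z]
    (hp : IsInducing fun z n => p n z) (hf : ∀ n, Continuous (f n))
    (hpf : ∀ n z, p n z = f n (p (n + 1) z))
    {𝔅 : ∀ n, Set (Set (X n))} (h𝔅 : ∀ n, IsTopologicalBasis (𝔅 n)) :
    IsTopologicalBasis (⋃ n, preimage (p n) '' 𝔅 n) := by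
  refine .of_hasBasis_nhds fun z => ?_
  rw [nhds_eq_iInf_comap_of_isInducing hp]
  have hbasis := (hasBasis_iInf_of_directed' _ _ (fun n => ((h𝔅 n).nhds_hasBasis).comap (p n))
    (antitone_comap_nhds hf hpf z).directed_ge).to_image_id'
  convert hbasis using 2 with t
  simp only [mem_iUnion, mem_image, Sigma.exists]
  grind

end InverseLimit

section CantorCube

variable {Z W : Type*}

theorem MeasureTheory.AnalyticSet.union [TopologicalSpace Z] {s t : Set Z} (hs : AnalyticSet s)
    (ht : AnalyticSet t) : AnalyticSet (s ∪ t) := by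
  rw [union_eq_iUnion]
  exact .iUnion (Bool.forall_bool.2 ⟨ht, hs⟩)

theorem MeasureTheory.AnalyticSet.inter [TopologicalSpace Z] [T2Space Z] {s t : Set Z}
    (hs : AnalyticSet s) (ht : AnalyticSet t) : AnalyticSet (s ∩ t) := by
  rw [inter_eq_iInter]
  exact .iInter (Bool.forall_bool.2 ⟨ht, hs⟩)

theorem MeasureTheory.AnalyticSet.iInter_of_polishSpace [TopologicalSpace Z] [PolishSpace Z]
    {ι : Type*} [Countable ι] {s : ι → Set Z} (hs : ∀ i, AnalyticSet (s i)) :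
    AnalyticSet (⋂ i, s i) := by
  cases isEmpty_or_nonempty ι
  · simpa using isClosed_univ.analyticSet
  · exact .iInter hs

instance : OrderClosedTopology Bool := ⟨isClosed_discrete _⟩

theorem setOf_isOpen_setOf_true_eq_iInter [TopologicalSpace Z] {B : Set (Z → Bool)}
    (hbasis : IsTopologicalBasis ((fun χ : Z → Bool => {z | χ z = true}) '' B)) :
    {χ : Z → Bool | IsOpen {z | χ z = true}} = ⋂ z, ({χ | χ z = false} ∪
      Prod.fst '' {q : (Z → Bool) × (Z → Bool) | q.2 ∈ B ∧ q.2 z = true ∧ q.2 ≤ q.1}) := by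
  ext χ
  simp [hbasis.isOpen_iff, Pi.le_def, Bool.le_iff_imp, imp_iff_not_or]

theorem isAnalyticTopology_of_isTopologicalBasis [TopologicalSpace Z] [Countable Z]
    {B : Set (Z → Bool)} (hB : AnalyticSet B)
    (hbasis : IsTopologicalBasis ((fun χ : Z → Bool => {z | χ z = true}) '' B)) :
    IsAnalyticTopology Z := by
  have : PolishSpace (Z → Bool) := {}
  unfold IsAnalyticTopology
  rw [setOf_isOpen_setOf_true_eq_iInter hbasis]
  refine .iInter_of_polishSpace fun z => .union ?_ ?_
  · exact (isClosed_eq (continuous_apply z) continuous_const).analyticSet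
  · refine .image_of_continuous (.inter (hB.preimage continuous_snd) (IsClosed.analyticSet ?_))
      continuous_fst
    exact (isClosed_eq ((continuous_apply z).comp continuous_snd) continuous_const).inter
      (isClosed_le continuous_snd continuous_fst)

open Classical in
theorem image_setOf_true_setOf_isOpen [TopologicalSpace Z] :
    (fun χ : Z → Bool => {z | χ z = true}) '' {χ | IsOpen {z | χ z = true}} = {V | IsOpen V} := by
  ext V
  refine ⟨?_, fun hV => ⟨fun z => decide (z ∈ V), by simpa using hV, by simp⟩⟩
  rintro ⟨χ, hχ, rfl⟩
  exact hχ

end CantorCube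

section Fsigma

variable {α β : Type*} [TopologicalSpace α] [TopologicalSpace β]

/-- `HasFsigmaBase X` unfolds to `∃ B, IsTopologicalBasis _ ∧ IsFsigma B`. -/
def IsFsigma (s : Set α) : Prop :=
  ∃ C : ℕ → Set α, (∀ n, IsClosed (C n)) ∧ s = ⋃ n, C n

theorem IsFsigma.image_of_continuous [CompactSpace α] [T2Space β] {s : Set α} (hs : IsFsigma s)
    {g : α → β} (hg : Continuous g) : IsFsigma (g '' s) := by
  obtain ⟨C, hC, rfl⟩ := hs
  exact ⟨fun n => g '' C n, fun n => hg.isClosedMap _ (hC n), image_iUnion⟩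

theorem IsFsigma.iUnion {s : ℕ → Set α} (hs : ∀ n, IsFsigma (s n)) : IsFsigma (⋃ n, s n) := by
  choose C hC hsC using hs
  refine ⟨fun m => C m.unpair.1 m.unpair.2, fun m => hC _ _, ?_⟩
  rw [iUnion_unpair, iUnion_congr hsC]

end Fsigma

section Subspace

variable {X : ℕ → Type*} [∀ n, TopologicalSpace (X n)] {f : ∀ n, X (n + 1) → X n}

theorem isTopologicalBasis_setOf_true_iUnion_image_comp (hf : ∀ n, Continuous (f n))
    (Y : Set {x : ∀ n, X n // ∀ n, x n = f n (x (n + 1))}) {B : ∀ n, Set (X n → Bool)}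
    (hB : ∀ n, IsTopologicalBasis ((fun χ : X n → Bool => {x | χ x = true}) '' B n)) :
    IsTopologicalBasis
      ((fun χ : Y → Bool => {y | χ y = true}) '' ⋃ n, (· ∘ fun y : Y => y.1.1 n) '' B n) := by
  have h := isTopologicalBasis_iUnion_image_preimage
    (IsInducing.subtypeVal.comp IsInducing.subtypeVal) hf (fun n (y : Y) => y.1.2 n) hB
  rw [image_iUnion]
  simp only [image_image] at h ⊢
  exact h

end Subspace

theorem stmt17_general (X : ℕ → Type*) [∀ n, TopologicalSpace (X n)]
    (hA : ∀ n, IsAnalyticTopology (X n))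
    (f : ∀ n, X (n + 1) → X n) (hf : ∀ n, Continuous (f n)) :
    (∀ Y : Set {x : ∀ n, X n // ∀ n, x n = f n (x (n + 1))},
        Y.Countable → IsAnalyticTopology ↥Y) ∧
    ((∀ n, HasFsigmaBase (X n)) →
      ∀ Y : Set {x : ∀ n, X n // ∀ n, x n = f n (x (n + 1))},
        Y.Countable → HasFsigmaBase ↥Y) := by
  refine ⟨fun Y hY => ?_, fun hFσ Y _ => ?_⟩
  · have : Countable Y := hY.to_subtype
    refine isAnalyticTopology_of_isTopologicalBasis
      (.iUnion fun n => (hA n).image_of_continuous (Pi.continuous_precomp _))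
      (isTopologicalBasis_setOf_true_iUnion_image_comp hf Y fun n => ?_)
    rw [image_setOf_true_setOf_isOpen]
    exact isTopologicalBasis_opens
  · choose B hB hBFσ using hFσ
    exact ⟨_, isTopologicalBasis_setOf_true_iUnion_image_comp hf Y hB,
      IsFsigma.iUnion fun n => IsFsigma.image_of_continuous (hBFσ n) (Pi.continuous_precomp _)⟩

/-- Proposition 2.2: for an inverse sequence of countable spaces with analytic
topologies, every countable subspace of the inverse limit has analytic topology;
moreover, if each `X n` has an F_σ base, so does every countable subspace of the
inverse limit. -/
theorem stmt17 (X : ℕ → Type*) [∀ n, TopologicalSpace (X n)]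
    [∀ n, Countable (X n)]
    (hA : ∀ n, IsAnalyticTopology (X n))
    (f : ∀ n, X (n + 1) → X n) (hf : ∀ n, Continuous (f n)) :
    (∀ Y : Set {x : ∀ n, X n // ∀ n, x n = f n (x (n + 1))},
        Y.Countable → IsAnalyticTopology ↥Y) ∧
    ((∀ n, HasFsigmaBase (X n)) →
      ∀ Y : Set {x : ∀ n, X n // ∀ n, x n = f n (x (n + 1))},
        Y.Countable → HasFsigmaBase ↥Y) :=
  stmt17_general X hA f hf
end
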